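/- arXiv:2401.14233 — 5 statements merged into one kernel-verified Lean document; each statement's English description precedes it below -/
import Mathlib

section
/- Let a, b be natural numbers, not both zero. Consider the interval [1, a+b] of integers with the two pairings f(x) = x + a defined on [1, b] (with range [a+1, a+b]) and g(x) = x + b defined on [1, a] (with range [b+1, a+b]). Then the number of orbits of the equivalence relation on {1, ..., a+b} generated by f and g equals gcd(a, b). -/
/-!
Each pairing moves a point by `a` or `b`, so it preserves the residue modulo `gcd a b`; hence
points in different residue classes lie in different orbits. Conversely, the rotation
`x ↦ x + a (mod a + b)` of `{1, …, a + b}` is `f` on `[1, b]` and `g⁻¹` on `[b + 1, a + b]`, so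
every orbit is invariant under it. Its iterates move `x` to `x + k a (mod a + b)`, and since
`gcd a (a + b) = gcd a b`, Bézout shows that these reach every point congruent to `x` modulo
`gcd a b`.
-/

theorem natCast_injOn_Icc (n : ℕ) : Set.InjOn (Nat.cast : ℕ → ZMod n) (Set.Icc 1 n) := by
  intro u ⟨hu1, hu2⟩ v ⟨hv1, hv2⟩ h
  refine ((ZMod.natCast_eq_natCast_iff u v n).mp h).eq_of_abs_lt ?_
  rw [abs_sub_lt_iff]
  omega

theorem exists_mem_Icc_natCast_eq {d : ℕ} [NeZero d] (z : ZMod d) :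
    ∃ x ∈ Set.Icc 1 d, (x : ZMod d) = z :=
  ⟨(z - 1).val + 1, ⟨by omega, (z - 1).val_lt⟩, by simp⟩

theorem exists_natCast_mul_eq_of_gcd_dvd {n : ℕ} [NeZero n] (a : ℕ) {t : ℤ}
    (ht : (Nat.gcd a n : ℤ) ∣ t) : ∃ k : ℕ, (k * a : ZMod n) = t := by
  obtain ⟨c, rfl⟩ := ht
  refine ⟨((c * Nat.gcdA a n : ℤ) : ZMod n).val, ?_⟩
  rw [ZMod.natCast_zmod_val, Nat.gcd_eq_gcd_ab]
  push_cast
  rw [ZMod.natCast_self]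
  ring

namespace IntervalPairing

def pairing (a b u v : ℕ) : Prop :=
  (1 ≤ u ∧ u ≤ b ∧ v = u + a) ∨ (1 ≤ u ∧ u ≤ a ∧ v = u + b)

def rotate (a b x : ℕ) : ℕ := if x ≤ b then x + a else x - b

variable {a b : ℕ}

theorem mapsTo_rotate : Set.MapsTo (rotate a b) (Set.Icc 1 (a + b)) (Set.Icc 1 (a + b)) := by
  intro x ⟨hx1, hx2⟩
  unfold rotate
  split_ifs <;> constructor <;> omega

theorem eqvGen_rotate {x : ℕ} (hx : x ∈ Set.Icc 1 (a + b)) :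
    Relation.EqvGen (pairing a b) x (rotate a b x) := by
  obtain ⟨hx1, hx2⟩ := hx
  unfold rotate
  split_ifs with h
  · exact .rel _ _ (.inl ⟨hx1, h, rfl⟩)
  · exact .symm _ _ (.rel _ _ (.inr ⟨by omega, by omega, by omega⟩))

theorem natCast_rotate (x : ℕ) :
    (rotate a b x : ZMod (a + b)) = x + a := by
  unfold rotate
  split_ifs with h
  · push_cast; rfl
  · have hab : ((a + b : ℕ) : ZMod (a + b)) = 0 := ZMod.natCast_self _
    push_cast [Nat.cast_sub (le_of_not_ge h)] at hab ⊢
    linear_combination -hab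

theorem eqvGen_iterate_rotate {x : ℕ} (hx : x ∈ Set.Icc 1 (a + b)) (k : ℕ) :
    Relation.EqvGen (pairing a b) x ((rotate a b)^[k] x) := by
  induction k with
  | zero => exact .refl x
  | succ k ih =>
    rw [Function.iterate_succ_apply']
    exact ih.trans _ _ _ (eqvGen_rotate (mapsTo_rotate.iterate k hx))

theorem natCast_iterate_rotate (x k : ℕ) :
    ((rotate a b)^[k] x : ZMod (a + b)) = x + k * a := by
  induction k with
  | zero => simp
  | succ k ih =>
    rw [Function.iterate_succ_apply', natCast_rotate, ih]
    push_cast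
    ring

theorem natCast_eq_of_eqvGen_pairing {u v : ℕ} (h : Relation.EqvGen (pairing a b) u v) :
    (u : ZMod (Nat.gcd a b)) = v := by
  induction h with
  | rel u v huv =>
    have ha : (a : ZMod (Nat.gcd a b)) = 0 :=
      (ZMod.natCast_eq_zero_iff _ _).mpr (Nat.gcd_dvd_left a b)
    have hb : (b : ZMod (Nat.gcd a b)) = 0 :=
      (ZMod.natCast_eq_zero_iff _ _).mpr (Nat.gcd_dvd_right a b)
    rcases huv with ⟨-, -, rfl⟩ | ⟨-, -, rfl⟩ <;> simp [ha, hb]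
  | refl u => rfl
  | symm u v _ ih => exact ih.symm
  | trans u v w _ _ ih₁ ih₂ => exact ih₁.trans ih₂

theorem eqvGen_pairing_of_natCast_eq {x y : ℕ} (hab : a + b ≠ 0)
    (hx : x ∈ Set.Icc 1 (a + b)) (hy : y ∈ Set.Icc 1 (a + b))
    (h : (x : ZMod (Nat.gcd a b)) = y) : Relation.EqvGen (pairing a b) x y := by
  have : NeZero (a + b) := ⟨hab⟩
  have hdvd : (Nat.gcd a (a + b) : ℤ) ∣ (y : ℤ) - x := by
    rw [add_comm a b, Nat.gcd_add_self_right]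
    exact (ZMod.intCast_eq_intCast_iff_dvd_sub _ _ _).mp (mod_cast h)
  obtain ⟨k, hk⟩ := exists_natCast_mul_eq_of_gcd_dvd (n := a + b) a hdvd
  have hrot : (rotate a b)^[k] x = y := by
    refine natCast_injOn_Icc _ (mapsTo_rotate.iterate k hx) hy ?_
    rw [natCast_iterate_rotate, hk]
    push_cast
    ring
  exact hrot ▸ eqvGen_iterate_rotate hx k

end IntervalPairing

open IntervalPairing

/-- The orbit count for the pseudogroup generated by the pairings
`f : [1,b] → [a+1,a+b], x ↦ x + a` and `g : [1,a] → [b+1,a+b], x ↦ x + b`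
on the interval `{1, ..., a+b}` equals `gcd(a,b)`. -/
theorem stmt_1 (a b : ℕ) (hab : a + b ≠ 0) :
    Nat.card (Quotient (Setoid.comap
      (Subtype.val : {x : ℕ // 1 ≤ x ∧ x ≤ a + b} → ℕ)
      ⟨Relation.EqvGen (fun u v : ℕ =>
          (1 ≤ u ∧ u ≤ b ∧ v = u + a) ∨ (1 ≤ u ∧ u ≤ a ∧ v = u + b)),
        Relation.EqvGen.is_equivalence _⟩)) = Nat.gcd a b := by
  have : NeZero (Nat.gcd a b) := ⟨by rw [Ne, Nat.gcd_eq_zero_iff]; omega⟩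
  let residue : {x : ℕ // 1 ≤ x ∧ x ≤ a + b} → ZMod (Nat.gcd a b) := fun x => x.val
  have hker : Setoid.comap Subtype.val ⟨Relation.EqvGen (pairing a b),
      Relation.EqvGen.is_equivalence _⟩ = Setoid.ker residue :=
    Setoid.ext fun x y =>
      ⟨natCast_eq_of_eqvGen_pairing, eqvGen_pairing_of_natCast_eq hab x.2 y.2⟩
  have hsurj : Function.Surjective residue := fun z => by
    obtain ⟨x, ⟨hx1, hxd⟩, rfl⟩ := exists_mem_Icc_natCast_eq z
    have hda : Nat.gcd a b ≤ a + b := Nat.le_of_dvd (Nat.pos_of_ne_zero hab)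
      (dvd_add (Nat.gcd_dvd_left a b) (Nat.gcd_dvd_right a b))
    exact ⟨⟨x, hx1, hxd.trans hda⟩, rfl⟩
  change Nat.card (Quotient (Setoid.comap Subtype.val ⟨Relation.EqvGen (pairing a b), _⟩)) = _
  rw [hker, Nat.card_congr (Setoid.quotientKerEquivOfSurjective residue hsurj), Nat.card_zmod]
end

section
/- Let D be a convex polygon with n ≥ 3 vertices. Any two triangulations of D using only the vertices of D as triangle vertices (diagonal subdivisions) differ by a sequence of at most 2n - 6 diagonal flips. -/
/-- A chord of a convex `n`-gon with vertices `0, ..., n-1`: an unordered pair of distinct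
vertices, recorded with its endpoints in increasing order. -/
def Chord (n : ℕ) := {p : Fin n × Fin n // p.1 < p.2}

instance (n : ℕ) : DecidableEq (Chord n) :=
  inferInstanceAs (DecidableEq {p : Fin n × Fin n // p.1 < p.2})

/-- Two chords cross (in the interior of the convex polygon) iff their endpoints interlace. -/
def Crossing (n : ℕ) (c d : Chord n) : Prop :=
  (c.1.1 < d.1.1 ∧ d.1.1 < c.1.2 ∧ c.1.2 < d.1.2) ∨
  (d.1.1 < c.1.1 ∧ c.1.1 < d.1.2 ∧ d.1.2 < c.1.2)

/-- A chord is a diagonal iff its endpoints are non-adjacent on the boundary circle. -/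
def IsDiagonal (n : ℕ) (c : Chord n) : Prop :=
  c.1.1.val + 1 < c.1.2.val ∧ ¬(c.1.1.val = 0 ∧ c.1.2.val = n - 1)

/-- A diagonal subdivision (triangulation using only polygon vertices): a maximal set of
pairwise non-crossing diagonals. -/
def IsTriangulation (n : ℕ) (T : Finset (Chord n)) : Prop :=
  (∀ c ∈ T, IsDiagonal n c) ∧
  (∀ c ∈ T, ∀ d ∈ T, c ≠ d → ¬Crossing n c d) ∧
  (∀ c, IsDiagonal n c → c ∉ T → ∃ d ∈ T, Crossing n c d)

/-- A flip replaces one diagonal by another, yielding again a triangulation. -/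
def Flip (n : ℕ) (T T' : Finset (Chord n)) : Prop :=
  IsTriangulation n T ∧ IsTriangulation n T' ∧
  ∃ c c' : Chord n, c ∈ T ∧ c' ∉ T ∧ T' = insert c' (T.erase c)

namespace StmtAux

variable {n : ℕ}

def mkC (n a b : ℕ) (hab : a < b) (hb : b < n) : Chord n :=
  ⟨(⟨a, hab.trans hb⟩, ⟨b, hb⟩), hab⟩

@[simp] lemma mkC_fst (a b : ℕ) (hab : a < b) (hb : b < n) :
    (mkC n a b hab hb).1.1.val = a := rfl

@[simp] lemma mkC_snd (a b : ℕ) (hab : a < b) (hb : b < n) :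
    (mkC n a b hab hb).1.2.val = b := rfl

lemma chord_lt (c : Chord n) : c.1.1.val < c.1.2.val := c.2

lemma chord_ub (c : Chord n) : c.1.2.val < n := c.1.2.isLt

lemma chord_ext {c d : Chord n} (h1 : c.1.1.val = d.1.1.val)
    (h2 : c.1.2.val = d.1.2.val) : c = d := by
  apply Subtype.ext
  exact Prod.ext (Fin.ext h1) (Fin.ext h2)

lemma chord_ne_of_fst {c d : Chord n} (h : c.1.1.val ≠ d.1.1.val) : c ≠ d := by
  rintro rfl; exact h rfl

lemma chord_ne_of_snd {c d : Chord n} (h : c.1.2.val ≠ d.1.2.val) : c ≠ d := by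
  rintro rfl; exact h rfl

lemma crossing_iff (c d : Chord n) :
    Crossing n c d ↔
      (c.1.1.val < d.1.1.val ∧ d.1.1.val < c.1.2.val ∧ c.1.2.val < d.1.2.val) ∨
      (d.1.1.val < c.1.1.val ∧ c.1.1.val < d.1.2.val ∧ d.1.2.val < c.1.2.val) := Iff.rfl

lemma crossing_symm {c d : Chord n} (h : Crossing n c d) : Crossing n d c := by
  rw [crossing_iff] at h ⊢; tauto

def memo (T : Finset (Chord n)) (a b : ℕ) : Prop :=
  ∃ c ∈ T, c.1.1.val = a ∧ c.1.2.val = b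

lemma memo_iff {T : Finset (Chord n)} {a b : ℕ} (hab : a < b) (hb : b < n) :
    memo T a b ↔ mkC n a b hab hb ∈ T := by
  constructor
  · rintro ⟨c, hc, h1, h2⟩
    have : c = mkC n a b hab hb := chord_ext (by simp [h1]) (by simp [h2])
    rwa [← this]
  · intro h; exact ⟨_, h, rfl, rfl⟩

/-- number of diagonals incident to vertex 0 -/
def deg (T : Finset (Chord n)) : ℕ := (T.filter (fun c => c.1.1.val = 0)).card

lemma step (hn : 3 ≤ n) {T : Finset (Chord n)} (hT : IsTriangulation n T)
    {v w : ℕ} (hv1 : 1 ≤ v) (hvw : v + 1 < w) (hw : w ≤ n - 1)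
    (hvC : v = 1 ∨ memo T 0 v) (hwC : w = n - 1 ∨ memo T 0 w)
    (hgap : ∀ k, v < k → k < w → ¬ memo T 0 k) :
    ∃ T₂ : Finset (Chord n), Flip n T T₂ ∧ deg T₂ = deg T + 1 := by
  classical
  obtain ⟨hdiag, hnc, hmax⟩ := hT
  have hwn : w < n := by omega
  set cvw : Chord n := mkC n v w (by omega) hwn with hcvw
  -- (v, w) ∈ T
  have hcvwT : cvw ∈ T := by
    by_contra hnot
    have hdg : IsDiagonal n cvw := by
      refine ⟨by simp only [hcvw, mkC_fst, mkC_snd]; omega, ?_⟩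
      simp only [hcvw, mkC_fst, mkC_snd]; omega
    obtain ⟨d, hd, hcr⟩ := hmax cvw hdg hnot
    have hxy := chord_lt d
    have hyn := chord_ub d
    rw [crossing_iff] at hcr
    simp only [hcvw, mkC_fst, mkC_snd] at hcr
    rcases hcr with ⟨h1, h2, h3⟩ | ⟨h1, h2, h3⟩
    · -- v < x ∧ x < w ∧ w < y ; use (0,w)
      have hw2 : memo T 0 w := hwC.resolve_left (by omega)
      obtain ⟨c, hc, hc1, hc2⟩ := hw2
      refine hnc c hc d hd (chord_ne_of_fst (by omega)) ?_
      rw [crossing_iff]; omega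
    · -- x < v ∧ v < y ∧ y < w
      rcases Nat.eq_zero_or_pos d.1.1.val with hx0 | hx0
      · exact hgap d.1.2.val (by omega) (by omega) ⟨d, hd, hx0, rfl⟩
      · have hv2 : memo T 0 v := hvC.resolve_left (by omega)
        obtain ⟨c, hc, hc1, hc2⟩ := hv2
        refine hnc c hc d hd (chord_ne_of_fst (by omega)) ?_
        rw [crossing_iff]; omega
  -- find the apex u
  have hSne : ((Finset.range w).filter
      (fun t => v < t ∧ (t = v + 1 ∨ memo T v t))).Nonempty := by
    refine ⟨v + 1, ?_⟩
    simp only [Finset.mem_filter, Finset.mem_range]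
    exact ⟨by omega, by omega, by tauto⟩
  obtain ⟨u, huS, humaxS⟩ : ∃ u ∈ (Finset.range w).filter
      (fun t => v < t ∧ (t = v + 1 ∨ memo T v t)),
      ∀ t ∈ (Finset.range w).filter (fun t => v < t ∧ (t = v + 1 ∨ memo T v t)), t ≤ u :=
    ⟨_, Finset.max'_mem _ hSne, fun t ht => Finset.le_max' _ t ht⟩
  rw [Finset.mem_filter, Finset.mem_range] at huS
  obtain ⟨huw, hvu, huT⟩ := huS
  have humax : ∀ t, t < w → v < t → (t = v + 1 ∨ memo T v t) → t ≤ u := by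
    intro t h1 h2 h3
    exact humaxS t (by
      simp only [Finset.mem_filter, Finset.mem_range]; exact ⟨h1, h2, h3⟩)
  -- the chord (u,w) is present or a boundary edge
  have huwT : u + 1 = w ∨ memo T u w := by
    rcases eq_or_lt_of_le (show u + 1 ≤ w by omega) with h | huw2
    · exact Or.inl h
    right
    by_contra hno
    rw [memo_iff huw hwn] at hno
    have hdg : IsDiagonal n (mkC n u w huw hwn) := by
      refine ⟨by simpa using huw2, ?_⟩
      simp only [mkC_fst, mkC_snd]; omega
    obtain ⟨d, hd, hcr⟩ := hmax _ hdg hno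
    have hxy := chord_lt d
    have hyn := chord_ub d
    rw [crossing_iff] at hcr
    simp only [mkC_fst, mkC_snd] at hcr
    rcases hcr with ⟨h1, h2, h3⟩ | ⟨h1, h2, h3⟩
    · -- u < x < w < y : d crosses cvw
      refine hnc cvw hcvwT d hd (chord_ne_of_fst (by simp only [hcvw, mkC_fst]; omega)) ?_
      rw [crossing_iff]; simp only [hcvw, mkC_fst, mkC_snd]; omega
    · -- x < u < y < w
      rcases lt_trichotomy d.1.1.val v with hx | hx | hx
      · refine hnc cvw hcvwT d hd (chord_ne_of_fst (by simp only [hcvw, mkC_fst]; omega)) ?_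
        rw [crossing_iff]; simp only [hcvw, mkC_fst, mkC_snd]; omega
      · -- x = v : y would be a better apex
        have : d.1.2.val ≤ u := humax d.1.2.val (by omega) (by omega)
          (Or.inr ⟨d, hd, hx, rfl⟩)
        omega
      · rcases huT with h | ⟨c, hc, hc1, hc2⟩
        · omega
        · refine hnc c hc d hd (chord_ne_of_fst (by omega)) ?_
          rw [crossing_iff]; omega
  -- the new chord (0,u)
  have hu0 : (0:ℕ) < u := by omega
  have hun : u < n := by omega
  set c0u : Chord n := mkC n 0 u hu0 hun with hc0u
  have hc0u_not : c0u ∉ T := by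
    intro h
    exact hgap u hvu huw ⟨c0u, h, rfl, rfl⟩
  set T₂ : Finset (Chord n) := insert c0u (T.erase cvw) with hT₂def
  -- the key non-crossing fact
  have hkey : ∀ d ∈ T, d ≠ cvw → ¬ Crossing n c0u d := by
    intro d hd hne hcr
    have hxy := chord_lt d
    have hyn := chord_ub d
    have hdnevw : ¬(d.1.1.val = v ∧ d.1.2.val = w) := by
      rintro ⟨h1, h2⟩
      exact hne (chord_ext (by simp [hcvw, h1]) (by simp [hcvw, h2]))
    rw [crossing_iff] at hcr
    simp only [hc0u, mkC_fst, mkC_snd] at hcr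
    rcases hcr with ⟨h1, h2, h3⟩ | ⟨h1, h2, h3⟩
    swap
    · omega
    -- 0 < x ∧ x < u ∧ u < y
    rcases lt_trichotomy d.1.2.val w with hy | hy | hy
    · -- y < w : crosses (u,w)
      rcases huwT with h | ⟨c, hc, hc1, hc2⟩
      · omega
      · refine hnc c hc d hd (chord_ne_of_snd (by omega)) ?_
        rw [crossing_iff]; omega
    · -- y = w
      rcases lt_trichotomy d.1.1.val v with hx | hx | hx
      · -- x < v : crosses (0,v)
        have hv2 : memo T 0 v := hvC.resolve_left (by omega)
        obtain ⟨c, hc, hc1, hc2⟩ := hv2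
        refine hnc c hc d hd (chord_ne_of_fst (by omega)) ?_
        rw [crossing_iff]; omega
      · exact hdnevw ⟨hx, hy⟩
      · rcases huT with h | ⟨c, hc, hc1, hc2⟩
        · omega
        · refine hnc c hc d hd (chord_ne_of_snd (by omega)) ?_
          rw [crossing_iff]; omega
    · -- y > w
      rcases lt_trichotomy d.1.1.val v with hx | hx | hx
      · have hv2 : memo T 0 v := hvC.resolve_left (by omega)
        obtain ⟨c, hc, hc1, hc2⟩ := hv2
        refine hnc c hc d hd (chord_ne_of_fst (by omega)) ?_
        rw [crossing_iff]; omega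
      · -- x = v : crosses (0,w)
        have hw2 : memo T 0 w := hwC.resolve_left (by omega)
        obtain ⟨c, hc, hc1, hc2⟩ := hw2
        refine hnc c hc d hd (chord_ne_of_fst (by omega)) ?_
        rw [crossing_iff]; omega
      · -- x > v : crosses (v,w)
        refine hnc cvw hcvwT d hd (chord_ne_of_snd (by simp only [hcvw, mkC_snd]; omega)) ?_
        rw [crossing_iff]; simp only [hcvw, mkC_fst, mkC_snd]; omega
  have hdiag₂ : ∀ c ∈ T₂, IsDiagonal n c := by
    intro c hc
    rcases Finset.mem_insert.mp hc with rfl | hc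
    · refine ⟨by simp only [hc0u, mkC_fst, mkC_snd]; omega, ?_⟩
      simp only [hc0u, mkC_fst, mkC_snd]; omega
    · exact hdiag c (Finset.mem_of_mem_erase hc)
  have hnc₂ : ∀ c ∈ T₂, ∀ d ∈ T₂, c ≠ d → ¬Crossing n c d := by
    intro c hc d hd hne
    rcases Finset.mem_insert.mp hc with rfl | hc <;>
      rcases Finset.mem_insert.mp hd with rfl | hd
    · exact absurd rfl hne
    · exact hkey d (Finset.mem_of_mem_erase hd) (Finset.ne_of_mem_erase hd)
    · intro hcr
      exact hkey c (Finset.mem_of_mem_erase hc) (Finset.ne_of_mem_erase hc)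
        (crossing_symm hcr)
    · exact hnc c (Finset.mem_of_mem_erase hc) d (Finset.mem_of_mem_erase hd) hne
  have hmax₂ : ∀ c, IsDiagonal n c → c ∉ T₂ → ∃ d ∈ T₂, Crossing n c d := by
    intro e hde heT₂
    have hab := chord_lt e
    have hbn := chord_ub e
    obtain ⟨hd1, hd2⟩ := hde
    by_cases hevw : e = cvw
    · refine ⟨c0u, Finset.mem_insert_self _ _, ?_⟩
      rw [hevw, crossing_iff]
      simp only [hcvw, hc0u, mkC_fst, mkC_snd]; omega
    have heT : e ∉ T := by
      intro h
      exact heT₂ (Finset.mem_insert_of_mem (Finset.mem_erase.mpr ⟨hevw, h⟩))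
    obtain ⟨d, hd, hcr⟩ := hmax e ⟨hd1, hd2⟩ heT
    by_cases hdvw : d = cvw
    swap
    · exact ⟨d, Finset.mem_insert_of_mem (Finset.mem_erase.mpr ⟨hdvw, hd⟩), hcr⟩
    rw [hdvw, crossing_iff] at hcr
    simp only [hcvw, mkC_fst, mkC_snd] at hcr
    rcases hcr with ⟨h1, h2, h3⟩ | ⟨h1, h2, h3⟩
    · -- a < v ∧ v < b ∧ b < w
      rcases lt_trichotomy e.1.2.val u with hb | hb | hb
      · -- b < u : crosses (v,u)
        rcases huT with h | ⟨c, hc, hc1, hc2⟩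
        · omega
        · refine ⟨c, Finset.mem_insert_of_mem (Finset.mem_erase.mpr
            ⟨chord_ne_of_snd (by simp only [hcvw, mkC_snd]; omega), hc⟩), ?_⟩
          rw [crossing_iff]; omega
      · -- b = u
        rcases Nat.eq_zero_or_pos e.1.1.val with ha | ha
        · exfalso
          apply heT₂
          have he : e = c0u := chord_ext (by rw [ha]; simp [hc0u]) (by rw [hb]; simp [hc0u])
          rw [he]
          exact Finset.mem_insert_self _ _
        · -- crosses (0,v)
          have hv2 : memo T 0 v := hvC.resolve_left (by omega)
          obtain ⟨c, hc, hc1, hc2⟩ := hv2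
          refine ⟨c, Finset.mem_insert_of_mem (Finset.mem_erase.mpr
            ⟨chord_ne_of_snd (by simp only [hcvw, mkC_snd]; omega), hc⟩), ?_⟩
          rw [crossing_iff]; omega
      · -- b > u
        rcases Nat.eq_zero_or_pos e.1.1.val with ha | ha
        · -- crosses (u,w)
          rcases huwT with h | ⟨c, hc, hc1, hc2⟩
          · omega
          · refine ⟨c, Finset.mem_insert_of_mem (Finset.mem_erase.mpr
              ⟨chord_ne_of_fst (by simp only [hcvw, mkC_fst]; omega), hc⟩), ?_⟩
            rw [crossing_iff]; omega
        · -- crosses (0,u)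
          refine ⟨c0u, Finset.mem_insert_self _ _, ?_⟩
          rw [crossing_iff]; simp only [hc0u, mkC_fst, mkC_snd]; omega
    · -- v < a ∧ a < w ∧ w < b
      rcases lt_trichotomy e.1.1.val u with ha | ha | ha
      · refine ⟨c0u, Finset.mem_insert_self _ _, ?_⟩
        rw [crossing_iff]; simp only [hc0u, mkC_fst, mkC_snd]; omega
      · -- a = u : crosses (0,w)
        have hw2 : memo T 0 w := hwC.resolve_left (by omega)
        obtain ⟨c, hc, hc1, hc2⟩ := hw2
        refine ⟨c, Finset.mem_insert_of_mem (Finset.mem_erase.mpr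
          ⟨chord_ne_of_fst (by simp only [hcvw, mkC_fst]; omega), hc⟩), ?_⟩
        rw [crossing_iff]; omega
      · -- a > u : crosses (u,w)
        rcases huwT with h | ⟨c, hc, hc1, hc2⟩
        · omega
        · refine ⟨c, Finset.mem_insert_of_mem (Finset.mem_erase.mpr
            ⟨chord_ne_of_fst (by simp only [hcvw, mkC_fst]; omega), hc⟩), ?_⟩
          rw [crossing_iff]; omega
  have hT₂tri : IsTriangulation n T₂ := ⟨hdiag₂, hnc₂, hmax₂⟩
  refine ⟨T₂, ⟨⟨hdiag, hnc, hmax⟩, hT₂tri, cvw, c0u, hcvwT, hc0u_not, rfl⟩, ?_⟩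
  -- cardinality
  unfold deg
  rw [hT₂def, Finset.filter_insert, if_pos (by simp [hc0u]), Finset.filter_erase,
    Finset.erase_eq_of_notMem (by
      intro h
      have := (Finset.mem_filter.mp h).2
      simp only [hcvw, mkC_fst] at this
      omega),
    Finset.card_insert_of_notMem (by
      intro h
      exact hc0u_not (Finset.mem_filter.mp h).1)]

lemma deg_le (hn : 3 ≤ n) {T : Finset (Chord n)} (hT : IsTriangulation n T) :
    deg T ≤ n - 3 := by
  classical
  have h : deg T ≤ (Finset.Icc 2 (n-2)).card := by
    apply Finset.card_le_card_of_injOn (fun c => c.1.2.val)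
    · intro c hc
      simp only [Finset.mem_coe, Finset.mem_filter] at hc
      obtain ⟨hc, hc0⟩ := hc
      obtain ⟨h1, h2⟩ := hT.1 c hc
      have := chord_ub c
      simp only [Finset.mem_coe, Finset.mem_Icc]
      omega
    · intro c hc d hd hcd
      rw [Finset.coe_filter, Set.mem_setOf_eq] at hc hd
      exact chord_ext (by omega) hcd
  rw [Nat.card_Icc] at h
  omega

lemma surj_of_deg (hn : 3 ≤ n) {T : Finset (Chord n)} (hT : IsTriangulation n T)
    (hdeg : deg T = n - 3) : ∀ k, 2 ≤ k → k ≤ n - 2 → memo T 0 k := by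
  classical
  intro k hk1 hk2
  set Tf := T.filter (fun c => c.1.1.val = 0) with hTf
  have himg : Tf.image (fun c => c.1.2.val) = Finset.Icc 2 (n-2) := by
    apply Finset.eq_of_subset_of_card_le
    · intro b hb
      rw [Finset.mem_image] at hb
      obtain ⟨c, hc, rfl⟩ := hb
      rw [hTf, Finset.mem_filter] at hc
      obtain ⟨hc, hc0⟩ := hc
      obtain ⟨h1, h2⟩ := hT.1 c hc
      have := chord_ub c
      rw [Finset.mem_Icc]
      omega
    · rw [Finset.card_image_of_injOn]
      · rw [Nat.card_Icc]
        have : Tf.card = deg T := rfl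
        omega
      · intro c hc d hd hcd
        rw [hTf, Finset.coe_filter, Set.mem_setOf_eq] at hc hd
        exact chord_ext (by omega) hcd
  have hk : k ∈ Tf.image (fun c => c.1.2.val) := by
    rw [himg, Finset.mem_Icc]; exact ⟨hk1, hk2⟩
  rw [Finset.mem_image] at hk
  obtain ⟨c, hc, rfl⟩ := hk
  rw [hTf, Finset.mem_filter] at hc
  exact ⟨c, hc.1, hc.2, rfl⟩

/-- a triangulation with maximal degree at 0 is the fan -/
lemma fan_mem (hn : 3 ≤ n) {T : Finset (Chord n)} (hT : IsTriangulation n T)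
    (hdeg : deg T = n - 3) :
    ∀ c : Chord n, c ∈ T ↔ (c.1.1.val = 0 ∧ IsDiagonal n c) := by
  intro c
  constructor
  · intro hc
    refine ⟨?_, hT.1 c hc⟩
    by_contra ha
    have ha : 1 ≤ c.1.1.val := by omega
    obtain ⟨h1, h2⟩ := hT.1 c hc
    have hbn := chord_ub c
    obtain ⟨c', hc', hc1', hc2'⟩ :=
      surj_of_deg hn hT hdeg (c.1.1.val + 1) (by omega) (by omega)
    refine hT.2.1 c' hc' c hc (chord_ne_of_fst (by omega)) ?_
    rw [crossing_iff]; omega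
  · rintro ⟨h0, h1, h2⟩
    have hab := chord_lt c
    have hbn := chord_ub c
    obtain ⟨c', hc', hc1', hc2'⟩ :=
      surj_of_deg hn hT hdeg c.1.2.val (by omega) (by omega)
    have : c = c' := chord_ext (by omega) (by omega)
    rwa [this]

lemma fan_unique (hn : 3 ≤ n) {T T' : Finset (Chord n)}
    (hT : IsTriangulation n T) (hT' : IsTriangulation n T')
    (h1 : deg T = n - 3) (h2 : deg T' = n - 3) : T = T' := by
  ext c
  rw [fan_mem hn hT h1, fan_mem hn hT' h2]

lemma exists_gap (hn : 3 ≤ n) {T : Finset (Chord n)} (hT : IsTriangulation n T)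
    (hdeg : deg T < n - 3) :
    ∃ v w : ℕ, 1 ≤ v ∧ v + 1 < w ∧ w ≤ n - 1 ∧
      (v = 1 ∨ memo T 0 v) ∧ (w = n - 1 ∨ memo T 0 w) ∧
      (∀ k, v < k → k < w → ¬ memo T 0 k) := by
  classical
  -- find a missing fan diagonal
  obtain ⟨kk, hkk1, hkk2, hkkno⟩ : ∃ kk, 2 ≤ kk ∧ kk ≤ n - 2 ∧ ¬ memo T 0 kk := by
    by_contra hno
    push_neg at hno
    have : (Finset.Icc 2 (n-2)).card ≤ deg T := by
      apply Finset.card_le_card_of_surjOn (fun c => c.1.2.val)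
      intro b hb
      rw [Finset.coe_Icc, Set.mem_Icc] at hb
      obtain ⟨c, hc, hc1, hc2⟩ := hno b hb.1 hb.2
      exact ⟨c, by rw [Finset.coe_filter, Set.mem_setOf_eq]; exact ⟨hc, hc1⟩, hc2⟩
    rw [Nat.card_Icc] at this
    omega
  -- maximal neighbour below kk
  have hSvne : ((Finset.range kk).filter
      (fun t => 0 < t ∧ (t = 1 ∨ memo T 0 t))).Nonempty := by
    refine ⟨1, ?_⟩
    simp only [Finset.mem_filter, Finset.mem_range]
    exact ⟨by omega, by omega, by tauto⟩
  obtain ⟨v, hvS, hvmax⟩ : ∃ v ∈ (Finset.range kk).filter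
      (fun t => 0 < t ∧ (t = 1 ∨ memo T 0 t)),
      ∀ t ∈ (Finset.range kk).filter (fun t => 0 < t ∧ (t = 1 ∨ memo T 0 t)), t ≤ v :=
    ⟨_, Finset.max'_mem _ hSvne, fun t ht => Finset.le_max' _ t ht⟩
  rw [Finset.mem_filter, Finset.mem_range] at hvS
  obtain ⟨hvkk, hv0, hvP⟩ := hvS
  -- minimal neighbour above kk
  have hSwne : ((Finset.Icc (kk+1) (n-1)).filter
      (fun t => t = n - 1 ∨ memo T 0 t)).Nonempty := by
    refine ⟨n - 1, ?_⟩
    simp only [Finset.mem_filter, Finset.mem_Icc]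
    exact ⟨⟨by omega, le_refl _⟩, by tauto⟩
  obtain ⟨w, hwS, hwmin⟩ : ∃ w ∈ (Finset.Icc (kk+1) (n-1)).filter
      (fun t => t = n - 1 ∨ memo T 0 t),
      ∀ t ∈ (Finset.Icc (kk+1) (n-1)).filter (fun t => t = n - 1 ∨ memo T 0 t), w ≤ t :=
    ⟨_, Finset.min'_mem _ hSwne, fun t ht => Finset.min'_le _ t ht⟩
  rw [Finset.mem_filter, Finset.mem_Icc] at hwS
  obtain ⟨⟨hwkk, hwn1⟩, hwP⟩ := hwS
  refine ⟨v, w, by omega, by omega, hwn1, hvP, hwP, ?_⟩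
  intro j hvj hjw hmemo
  have hj0 : 0 < j := by
    obtain ⟨c, hc, hc1, hc2⟩ := hmemo
    have := chord_lt c
    omega
  have hjn : j ≤ n - 1 := by
    obtain ⟨c, hc, hc1, hc2⟩ := hmemo
    have := chord_ub c
    omega
  rcases lt_trichotomy j kk with h | h | h
  · have : j ≤ v := hvmax j (by
      simp only [Finset.mem_filter, Finset.mem_range]
      exact ⟨h, hj0, Or.inr hmemo⟩)
    omega
  · exact hkkno (h ▸ hmemo)
  · have : w ≤ j := hwmin j (by
      simp only [Finset.mem_filter, Finset.mem_Icc]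
      exact ⟨⟨by omega, hjn⟩, Or.inr hmemo⟩)
    omega

lemma climb (hn : 3 ≤ n) :
    ∀ k : ℕ, ∀ T : Finset (Chord n), IsTriangulation n T → deg T + k = n - 3 →
      ∃ f : ℕ → Finset (Chord n), f 0 = T ∧ IsTriangulation n (f k) ∧
        deg (f k) = n - 3 ∧ ∀ i < k, Flip n (f i) (f (i + 1)) := by
  intro k
  induction k with
  | zero =>
    intro T hT hdeg
    exact ⟨fun _ => T, rfl, hT, by simpa using hdeg, fun i hi => absurd hi (by omega)⟩
  | succ k ih =>
    intro T hT hdeg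
    obtain ⟨v, w, hv1, hvw, hw, hvC, hwC, hgap⟩ :=
      exists_gap hn hT (by omega)
    obtain ⟨T₂, hflip, hdeg₂⟩ := step hn hT hv1 hvw hw hvC hwC hgap
    obtain ⟨g, hg0, hgtri, hgdeg, hgflip⟩ := ih T₂ hflip.2.1 (by omega)
    refine ⟨fun i => if i = 0 then T else g (i - 1), rfl, ?_, ?_, ?_⟩
    · simpa using hgtri
    · simpa using hgdeg
    · intro i hi
      rcases Nat.eq_zero_or_pos i with rfl | hi0
      · simpa [hg0] using hflip
      · obtain ⟨j, rfl⟩ : ∃ j, i = j + 1 := ⟨i - 1, by omega⟩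
        simpa using hgflip j (by omega)

lemma flip_symm {T T' : Finset (Chord n)} (h : Flip n T T') : Flip n T' T := by
  obtain ⟨h1, h2, c, c', hc, hc', rfl⟩ := h
  have hne : c ≠ c' := fun h => hc' (h ▸ hc)
  refine ⟨h2, h1, c', c, Finset.mem_insert_self _ _, ?_, ?_⟩
  · simp only [Finset.mem_insert, Finset.mem_erase]
    rintro (h | ⟨h, -⟩)
    · exact hne h
    · exact h rfl
  · rw [Finset.erase_insert (fun h => hc' (Finset.mem_of_mem_erase h)),
      Finset.insert_erase hc]

end StmtAux

open StmtAux in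
/-- Any two diagonal subdivisions of a convex `n`-gon (`n ≥ 3`) differ by a sequence of at
most `2n - 6` flips. -/
theorem stmt_8 (n : ℕ) (hn : 3 ≤ n) (T T' : Finset (Chord n))
    (hT : IsTriangulation n T) (hT' : IsTriangulation n T') :
    ∃ (m : ℕ) (f : ℕ → Finset (Chord n)), m ≤ 2 * n - 6 ∧ f 0 = T ∧ f m = T' ∧
      ∀ i < m, Flip n (f i) (f (i + 1)) := by
  classical
  obtain ⟨k, hk⟩ : ∃ k, deg T + k = n - 3 :=
    ⟨n - 3 - deg T, by have := deg_le hn hT; omega⟩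
  obtain ⟨k', hk'⟩ : ∃ k', deg T' + k' = n - 3 :=
    ⟨n - 3 - deg T', by have := deg_le hn hT'; omega⟩
  obtain ⟨f, hf0, hftri, hfdeg, hfflip⟩ := climb hn k T hT hk
  obtain ⟨g, hg0, hgtri, hgdeg, hgflip⟩ := climb hn k' T' hT' hk'
  have hFF : f k = g k' := fan_unique hn hftri hgtri hfdeg hgdeg
  refine ⟨k + k', fun i => if i ≤ k then f i else g (k + k' - i),
    by omega, ?_, ?_, ?_⟩
  · show (if 0 ≤ k then f 0 else g (k + k' - 0)) = T
    rw [if_pos (Nat.zero_le k)]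
    exact hf0
  · show (if k + k' ≤ k then f (k + k') else g (k + k' - (k + k'))) = T'
    by_cases h : k + k' ≤ k
    · rw [if_pos h, show k + k' = k by omega, hFF, show k' = 0 by omega]
      exact hg0
    · rw [if_neg h, Nat.sub_self]
      exact hg0
  · intro i hi
    show Flip n (if i ≤ k then f i else g (k + k' - i))
      (if i + 1 ≤ k then f (i + 1) else g (k + k' - (i + 1)))
    by_cases h : i + 1 ≤ k
    · rw [if_pos (by omega : i ≤ k), if_pos h]
      exact hfflip i (by omega)
    · have hjlt : k + k' - i - 1 < k' := by omega
      have h1 : (if i ≤ k then f i else g (k + k' - i)) = g (k + k' - i - 1 + 1) := by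
        by_cases hik : i ≤ k
        · rw [if_pos hik, show i = k by omega, hFF]
          congr 1
          omega
        · rw [if_neg hik]
          congr 1
          omega
      rw [h1, if_neg h, show k + k' - (i + 1) = k + k' - i - 1 by omega]
      exact flip_symm (hgflip _ hjlt)
end

section
/- In any diagonal subdivision of a convex n-gon (n ≥ 3), every vertex x has degree (number of diagonals incident to x) at most n - 3, and if deg(x) < n - 3 then there exists a flip increasing deg(x) by one; consequently any diagonal subdivision can be transformed by at most n - 3 - deg(x) flips into the fan subdivision at x (all diagonals incident to x). -/
/-- The degree of a vertex `x` in a diagonal subdivision: the number of diagonals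
incident to `x`. -/
def chordDeg (n : ℕ) (T : Finset (Chord n)) (x : Fin n) : ℕ :=
  (T.filter (fun c => c.1.1 = x ∨ c.1.2 = x)).card

namespace Stmt9Aux

def mkc (n a b : ℕ) (hab : a < b) (hb : b < n) : Chord n :=
  ⟨(⟨a, lt_trans hab hb⟩, ⟨b, hb⟩), hab⟩

lemma chord_ext {n : ℕ} {c d : Chord n} (h1 : c.1.1.val = d.1.1.val)
    (h2 : c.1.2.val = d.1.2.val) : c = d := by
  apply Subtype.ext
  exact Prod.ext (Fin.ext h1) (Fin.ext h2)

lemma crossing_symm {n : ℕ} {c d : Chord n} (h : Crossing n c d) : Crossing n d c := by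
  unfold Crossing at *; tauto

lemma crossing_iff {n : ℕ} (c d : Chord n) :
    Crossing n c d ↔
      ((c.1.1.val < d.1.1.val ∧ d.1.1.val < c.1.2.val ∧ c.1.2.val < d.1.2.val) ∨
       (d.1.1.val < c.1.1.val ∧ c.1.1.val < d.1.2.val ∧ d.1.2.val < c.1.2.val)) := by
  unfold Crossing; exact Iff.rfl

lemma crossing_mkc_iff {n a b : ℕ} (hab : a < b) (hb : b < n) (d : Chord n) :
    Crossing n (mkc n a b hab hb) d ↔
      ((a < d.1.1.val ∧ d.1.1.val < b ∧ b < d.1.2.val) ∨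
       (d.1.1.val < a ∧ a < d.1.2.val ∧ d.1.2.val < b)) := by
  rw [crossing_iff]; rfl

lemma mkc_eq_iff {n a b : ℕ} (hab : a < b) (hb : b < n) (d : Chord n) :
    mkc n a b hab hb = d ↔ (d.1.1.val = a ∧ d.1.2.val = b) := by
  constructor
  · rintro rfl; exact ⟨rfl, rfl⟩
  · rintro ⟨h1, h2⟩; exact chord_ext h1.symm h2.symm

lemma mkc_diag {n a b : ℕ} (hab : a < b) (hb : b < n) (h1 : a + 1 < b)
    (h2 : ¬(a = 0 ∧ b = n - 1)) : IsDiagonal n (mkc n a b hab hb) := ⟨h1, h2⟩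

section Deg
variable {n : ℕ}

lemma mem_incident {T : Finset (Chord n)} (hT : IsTriangulation n T) {x0 : Fin n}
    (hx : x0.val = 0) {c : Chord n} (hc : c ∈ T) (h : c.1.1 = x0 ∨ c.1.2 = x0) :
    c.1.1 = x0 ∧ 2 ≤ c.1.2.val ∧ c.1.2.val ≤ n - 2 := by
  obtain ⟨hd1, hd2⟩ := hT.1 c hc
  have hlt : c.1.1.val < c.1.2.val := c.2
  have hn2 : c.1.2.val < n := c.1.2.isLt
  have h11 : c.1.1 = x0 := by
    rcases h with h | h
    · exact h
    · exfalso; rw [h, hx] at hlt; omega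
  have h0 : c.1.1.val = 0 := by rw [h11, hx]
  refine ⟨h11, by omega, ?_⟩
  rcases Nat.lt_or_ge c.1.2.val (n-1) with h' | h'
  · omega
  · exfalso; exact hd2 ⟨h0, by omega⟩

lemma deg_image_subset {T : Finset (Chord n)} (hT : IsTriangulation n T) {x0 : Fin n}
    (hx : x0.val = 0) :
    ∀ c ∈ T.filter (fun c => c.1.1 = x0 ∨ c.1.2 = x0),
      (fun c : Chord n => c.1.2.val) c ∈ Finset.Icc 2 (n - 2) := by
  intro c hc
  rw [Finset.mem_filter] at hc
  obtain ⟨_, h2, h3⟩ := mem_incident hT hx hc.1 hc.2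
  exact Finset.mem_Icc.mpr ⟨h2, h3⟩

lemma deg_injOn {T : Finset (Chord n)} (hT : IsTriangulation n T) {x0 : Fin n}
    (hx : x0.val = 0) :
    Set.InjOn (fun c : Chord n => c.1.2.val)
      (T.filter (fun c => c.1.1 = x0 ∨ c.1.2 = x0)) := by
  intro c hc d hd h
  simp only [Finset.coe_filter, Set.mem_setOf_eq] at hc hd
  have h1 := (mem_incident hT hx hc.1 hc.2).1
  have h2 := (mem_incident hT hx hd.1 hd.2).1
  exact chord_ext (by rw [h1, h2]) h

lemma deg_le {T : Finset (Chord n)} (hT : IsTriangulation n T) {x0 : Fin n}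
    (hx : x0.val = 0) (hn : 3 ≤ n) : chordDeg n T x0 ≤ n - 3 := by
  have := Finset.card_le_card_of_injOn _ (deg_image_subset hT hx) (deg_injOn hT hx)
  rw [Nat.card_Icc] at this
  unfold chordDeg
  omega

lemma exists_missing {T : Finset (Chord n)} (hT : IsTriangulation n T) {x0 : Fin n}
    (hx : x0.val = 0) (hn : 3 ≤ n) (hdeg : chordDeg n T x0 < n - 3) :
    ∃ v, 2 ≤ v ∧ v ≤ n - 2 ∧ ∀ c ∈ T, ¬(c.1.1 = x0 ∧ c.1.2.val = v) := by
  by_contra hcon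
  push_neg at hcon
  have hsub : Finset.Icc 2 (n-2) ⊆
      (T.filter (fun c => c.1.1 = x0 ∨ c.1.2 = x0)).image (fun c : Chord n => c.1.2.val) := by
    intro v hv
    rw [Finset.mem_Icc] at hv
    obtain ⟨c, hcT, hc1, hc2⟩ := hcon v hv.1 hv.2
    exact Finset.mem_image.mpr ⟨c, Finset.mem_filter.mpr ⟨hcT, Or.inl hc1⟩, hc2⟩
  have h1 := Finset.card_le_card hsub
  have h2 := Finset.card_image_le (s := T.filter (fun c => c.1.1 = x0 ∨ c.1.2 = x0))
    (f := fun c : Chord n => c.1.2.val)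
  rw [Nat.card_Icc] at h1
  unfold chordDeg at hdeg
  omega

lemma full_of_deg_eq {T : Finset (Chord n)} (hT : IsTriangulation n T) {x0 : Fin n}
    (hx : x0.val = 0) (hn : 3 ≤ n) (hdeg : chordDeg n T x0 = n - 3) :
    ∀ c ∈ T, c.1.1 = x0 ∨ c.1.2 = x0 := by
  intro c hc
  by_contra hni
  push_neg at hni
  obtain ⟨hd1, hd2⟩ := hT.1 c hc
  have hlt : c.1.1.val < c.1.2.val := c.2
  have hq : c.1.2.val < n := c.1.2.isLt
  have hp1 : 1 ≤ c.1.1.val := by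
    rcases Nat.eq_zero_or_pos c.1.1.val with h | h
    · exact absurd (Fin.ext (h.trans hx.symm)) hni.1
    · exact h
  -- image = Icc
  have himg : (T.filter (fun c => c.1.1 = x0 ∨ c.1.2 = x0)).image
      (fun c : Chord n => c.1.2.val) = Finset.Icc 2 (n - 2) := by
    apply Finset.eq_of_subset_of_card_le
    · intro v hv
      obtain ⟨c', hc', hv'⟩ := Finset.mem_image.mp hv
      exact hv' ▸ deg_image_subset hT hx c' hc'
    · rw [Nat.card_Icc, Finset.card_image_of_injOn (deg_injOn hT hx)]
      unfold chordDeg at hdeg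
      omega
  have hmem : c.1.1.val + 1 ∈ Finset.Icc 2 (n - 2) := Finset.mem_Icc.mpr (by omega)
  rw [← himg, Finset.mem_image] at hmem
  obtain ⟨c', hc', hval⟩ := hmem
  rw [Finset.mem_filter] at hc'
  have hc'1 := (mem_incident hT hx hc'.1 hc'.2).1
  have hcross : Crossing n c' c := by
    rw [crossing_iff]
    left
    have : c'.1.1.val = 0 := by rw [hc'1, hx]
    omega
  exact hT.2.1 c' hc'.1 c hc (fun he => hni.1 (by rw [← he, hc'1])) hcross

end Deg

@[simp] lemma mkc_fst {n a b : ℕ} (hab : a < b) (hb : b < n) :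
    (mkc n a b hab hb).1.1.val = a := rfl
@[simp] lemma mkc_snd {n a b : ℕ} (hab : a < b) (hb : b < n) :
    (mkc n a b hab hb).1.2.val = b := rfl

/-- `y` is a "link vertex" of `x0`: a polygon neighbour of `x0 = 0` or joined to it. -/
def linkP (n : ℕ) (T : Finset (Chord n)) (x0 : Fin n) (y : ℕ) : Prop :=
  y = 1 ∨ y = n - 1 ∨ ∃ c ∈ T, c.1.1 = x0 ∧ c.1.2.val = y

lemma linkP_iff {n : ℕ} {T : Finset (Chord n)} {x0 : Fin n} {y : ℕ} :
    linkP n T x0 y ↔ (y = 1 ∨ y = n - 1 ∨ ∃ c ∈ T, c.1.1 = x0 ∧ c.1.2.val = y) :=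
  Iff.rfl

/-- The second part of the theorem: a degree-increasing flip exists. -/
lemma flip_up {n : ℕ} {T : Finset (Chord n)} (hT : IsTriangulation n T) {x0 : Fin n}
    (hx : x0.val = 0) (hn : 3 ≤ n) (hdeg : chordDeg n T x0 < n - 3) :
    ∃ T', Flip n T T' ∧ chordDeg n T' x0 = chordDeg n T x0 + 1 := by
  classical
  obtain ⟨v, hv2, hvn2, hvmiss⟩ := exists_missing hT hx hn hdeg
  have hP1 : linkP n T x0 1 := Or.inl rfl
  have hPn : linkP n T x0 (n - 1) := Or.inr (Or.inl rfl)
  have hPv : ¬ linkP n T x0 v := by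
    rintro (h | h | ⟨c, hcT, hc1, hc2⟩)
    · omega
    · omega
    · exact hvmiss c hcT ⟨hc1, hc2⟩
  have hPchord : ∀ y (hy1 : 0 < y) (hy2 : y < n), linkP n T x0 y → 2 ≤ y → y ≤ n - 2 →
      mkc n 0 y hy1 hy2 ∈ T := by
    rintro y hy1 hy2 (h | h | ⟨c, hcT, hc1, hc2⟩) h2 h3
    · omega
    · omega
    · have : mkc n 0 y hy1 hy2 = c :=
        chord_ext (by simp [hc1, hx]) (by simp [hc2])
      rw [this]; exact hcT
  have hA1 : (1 : ℕ) ∈ (Finset.range n).filter (fun y => linkP n T x0 y ∧ y < v) := by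
    rw [Finset.mem_filter, Finset.mem_range]; exact ⟨by omega, hP1, by omega⟩
  have hBn : n - 1 ∈ (Finset.range n).filter (fun y => linkP n T x0 y ∧ v < y) := by
    rw [Finset.mem_filter, Finset.mem_range]; exact ⟨by omega, hPn, by omega⟩
  clear hP1 hPn
  set u := (((Finset.range n).filter (fun y => linkP n T x0 y ∧ y < v)).max' ⟨1, hA1⟩) with hudef
  set w := (((Finset.range n).filter (fun y => linkP n T x0 y ∧ v < y)).min' ⟨n - 1, hBn⟩)
    with hwdef
  have huA : u ∈ (Finset.range n).filter (fun y => linkP n T x0 y ∧ y < v) :=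
    Finset.max'_mem _ _
  have hwB : w ∈ (Finset.range n).filter (fun y => linkP n T x0 y ∧ v < y) :=
    Finset.min'_mem _ _
  rw [Finset.mem_filter, Finset.mem_range] at huA hwB
  obtain ⟨hun, hPu, huv⟩ := huA
  obtain ⟨hwn, hPw, hvw⟩ := hwB
  have hu1 : 1 ≤ u := Finset.le_max' _ 1 hA1
  have hwn1 : w ≤ n - 1 := Finset.min'_le _ _ hBn
  have hgap : ∀ y, u < y → y < w → ¬ linkP n T x0 y := by
    intro y hy1 hy2 hPy
    rcases lt_trichotomy y v with h | h | h
    · have hyA : y ∈ (Finset.range n).filter (fun y => linkP n T x0 y ∧ y < v) := by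
        rw [Finset.mem_filter, Finset.mem_range]; exact ⟨by omega, hPy, h⟩
      have := Finset.le_max' _ y hyA; omega
    · exact hPv (h ▸ hPy)
    · have hyB : y ∈ (Finset.range n).filter (fun y => linkP n T x0 y ∧ v < y) := by
        rw [Finset.mem_filter, Finset.mem_range]; exact ⟨by omega, hPy, h⟩
      have := Finset.min'_le _ y hyB; omega
  have huw2 : u + 1 < w := by omega
  have h0u : ∀ (h1 : (0:ℕ) < u) (h2 : u < n), 2 ≤ u → mkc n 0 u h1 h2 ∈ T := by
    intro h1 h2 h3; exact hPchord u h1 h2 hPu h3 (by omega)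
  have h0w : ∀ (h1 : (0:ℕ) < w) (h2 : w < n), w ≤ n - 2 → mkc n 0 w h1 h2 ∈ T := by
    intro h1 h2 h3; exact hPchord w h1 h2 hPw (by omega) h3
  have huwlt : u < w := by omega
  -- Step A : the chord (u,w) is in T
  have huw : mkc n u w huwlt hwn ∈ T := by
    by_contra huwT
    obtain ⟨d, hdT, hcr⟩ := hT.2.2 _ (mkc_diag huwlt hwn huw2 (by omega)) huwT
    rw [crossing_mkc_iff] at hcr
    have hpq : d.1.1.val < d.1.2.val := d.2
    have hqn : d.1.2.val < n := d.1.2.isLt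
    rcases hcr with ⟨h1, h2, h3⟩ | ⟨h1, h2, h3⟩
    · refine hT.2.1 _ (h0w (by omega) hwn (by omega)) d hdT ?_ ?_
      · intro heq; rw [mkc_eq_iff] at heq; omega
      · rw [crossing_mkc_iff]; left; exact ⟨by omega, h2, h3⟩
    · rcases Nat.eq_zero_or_pos d.1.1.val with hp0 | hp0
      · have hq : linkP n T x0 d.1.2.val :=
          Or.inr (Or.inr ⟨d, hdT, Fin.ext (by omega), rfl⟩)
        exact hgap _ (by omega) h3 hq
      · refine hT.2.1 _ (h0u (by omega) (by omega) (by omega)) d hdT ?_ ?_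
        · intro heq; rw [mkc_eq_iff] at heq; omega
        · rw [crossing_mkc_iff]; left; exact ⟨hp0, h1, h2⟩
  -- Step B : the apex z
  have huZ : u + 1 ∈ (Finset.range n).filter
      (fun t => u < t ∧ t < w ∧ (t = u + 1 ∨ ∃ c ∈ T, c.1.1.val = u ∧ c.1.2.val = t)) := by
    rw [Finset.mem_filter, Finset.mem_range]
    exact ⟨by omega, by omega, by omega, Or.inl rfl⟩
  set z := ((Finset.range n).filter
      (fun t => u < t ∧ t < w ∧ (t = u + 1 ∨ ∃ c ∈ T, c.1.1.val = u ∧ c.1.2.val = t))).max'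
      ⟨u + 1, huZ⟩ with hzdef
  have hzZ := Finset.max'_mem ((Finset.range n).filter
      (fun t => u < t ∧ t < w ∧ (t = u + 1 ∨ ∃ c ∈ T, c.1.1.val = u ∧ c.1.2.val = t)))
      ⟨u + 1, huZ⟩
  rw [Finset.mem_filter, Finset.mem_range] at hzZ
  obtain ⟨hzn, huz, hzw, hzch⟩ := hzZ
  have hzmax : ∀ t, u < t → t < w → (∃ c ∈ T, c.1.1.val = u ∧ c.1.2.val = t) → t ≤ z := by
    intro t h1 h2 h3
    refine Finset.le_max' _ t ?_
    rw [Finset.mem_filter, Finset.mem_range]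
    exact ⟨by omega, h1, h2, Or.inr h3⟩
  have huzT : ∀ (h2 : u < z) (h3 : z < n), u + 1 < z → mkc n u z h2 h3 ∈ T := by
    intro h2 h3 h4
    rcases hzch with h | ⟨c, hcT, hc1, hc2⟩
    · omega
    · have : mkc n u z h2 h3 = c := chord_ext (by simp [hc1]) (by simp [hc2]; rfl)
      rw [this]; exact hcT
  clear hzch
  have hzwT : ∀ (h2 : z < w) (h3 : w < n), z + 1 < w → mkc n z w h2 h3 ∈ T := by
    intro h2 h3 h4
    by_contra hnT
    obtain ⟨d, hdT, hcr⟩ := hT.2.2 _ (mkc_diag h2 h3 h4 (by omega)) hnT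
    rw [crossing_mkc_iff] at hcr
    have hpq : d.1.1.val < d.1.2.val := d.2
    have hqn : d.1.2.val < n := d.1.2.isLt
    rcases hcr with ⟨h5, h6, h7⟩ | ⟨h5, h6, h7⟩
    · refine hT.2.1 _ huw d hdT ?_ ?_
      · intro heq; rw [mkc_eq_iff] at heq; omega
      · rw [crossing_mkc_iff]; left; exact ⟨by omega, h6, h7⟩
    · rcases lt_trichotomy d.1.1.val u with hp | hp | hp
      · refine hT.2.1 _ huw d hdT ?_ ?_
        · intro heq; rw [mkc_eq_iff] at heq; omega
        · rw [crossing_mkc_iff]; right; exact ⟨hp, by omega, h7⟩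
      · have := hzmax d.1.2.val (by omega) h7 ⟨d, hdT, hp.symm ▸ rfl, rfl⟩
        omega
      · refine hT.2.1 _ (huzT huz hzn (by omega)) d hdT ?_ ?_
        · intro heq; rw [mkc_eq_iff] at heq; omega
        · rw [crossing_mkc_iff]; left; exact ⟨hp, h5, h6⟩
  have hz0 : (0:ℕ) < z := by omega
  -- Step C : the new chord c0 = (0,z)
  have hc0diag : IsDiagonal n (mkc n 0 z hz0 hzn) := mkc_diag hz0 hzn (by omega) (by omega)
  have hc0x : (mkc n 0 z hz0 hzn).1.1 = x0 := Fin.ext (by simp [hx])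
  have hc0T : mkc n 0 z hz0 hzn ∉ T := by
    intro h
    exact hgap z huz hzw (Or.inr (Or.inr ⟨_, h, hc0x, rfl⟩))
  have hc0uw : Crossing n (mkc n 0 z hz0 hzn) (mkc n u w huwlt hwn) := by
    rw [crossing_mkc_iff]; simp only [mkc_fst, mkc_snd]; omega
  have honly : ∀ e ∈ T, Crossing n (mkc n 0 z hz0 hzn) e → e = mkc n u w huwlt hwn := by
    intro e heT hcr
    rw [crossing_mkc_iff] at hcr
    have hpq : e.1.1.val < e.1.2.val := e.2
    have hqn : e.1.2.val < n := e.1.2.isLt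
    have hcr' : 0 < e.1.1.val ∧ e.1.1.val < z ∧ z < e.1.2.val := by
      rcases hcr with h | h
      · exact h
      · omega
    obtain ⟨h1, h2, h3⟩ := hcr'
    clear hcr
    rcases lt_trichotomy e.1.1.val u with hp | hp | hp
    · exact absurd (by rw [crossing_mkc_iff]; left; exact ⟨h1, hp, by omega⟩)
        (hT.2.1 _ (h0u (by omega) (by omega) (by omega)) e heT
          (by intro heq; rw [mkc_eq_iff] at heq; omega))
    · rcases lt_trichotomy e.1.2.val w with hq | hq | hq
      · exact absurd (hzmax e.1.2.val (by omega) hq ⟨e, heT, hp.symm ▸ rfl, rfl⟩) (by omega)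
      · exact chord_ext (by simp [hp]) (by simp [hq])
      · exact absurd (by rw [crossing_mkc_iff]; left; exact ⟨by omega, by omega, hq⟩)
          (hT.2.1 _ (h0w (by omega) hwn (by omega)) e heT
            (by intro heq; rw [mkc_eq_iff] at heq; omega))
    · exact absurd (by rw [crossing_mkc_iff]; left; exact ⟨hp, h2, h3⟩)
        (hT.2.1 _ (huzT huz hzn (by omega)) e heT
          (by intro heq; rw [mkc_eq_iff] at heq; omega))
  -- Step D : the flipped triangulation
  have hT'mem : ∀ {g : Chord n}, g ∈ T → g ≠ mkc n u w huwlt hwn →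
      g ∈ insert (mkc n 0 z hz0 hzn) (T.erase (mkc n u w huwlt hwn)) := by
    intro g h1 h2
    exact Finset.mem_insert.mpr (Or.inr (Finset.mem_erase.mpr ⟨h2, h1⟩))
  have hT'tri : IsTriangulation n
      (insert (mkc n 0 z hz0 hzn) (T.erase (mkc n u w huwlt hwn))) := by
    refine ⟨?_, ?_, ?_⟩
    · intro e he
      rcases Finset.mem_insert.mp he with h | h
      · rw [h]; exact hc0diag
      · exact hT.1 e (Finset.mem_of_mem_erase h)
    · intro e he f hf hne
      rcases Finset.mem_insert.mp he with h | h <;> rcases Finset.mem_insert.mp hf with h' | h'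
      · exact absurd (h.trans h'.symm) hne
      · rw [h]
        intro hcr
        exact (Finset.mem_erase.mp h').1 (honly f (Finset.mem_of_mem_erase h') hcr)
      · rw [h']
        intro hcr
        exact (Finset.mem_erase.mp h).1 (honly e (Finset.mem_of_mem_erase h) (crossing_symm hcr))
      · exact hT.2.1 e (Finset.mem_of_mem_erase h) f (Finset.mem_of_mem_erase h') hne
    · intro e hediag heT'
      by_cases he : e = mkc n u w huwlt hwn
      · refine ⟨mkc n 0 z hz0 hzn, Finset.mem_insert_self _ _, ?_⟩
        rw [he]; exact crossing_symm hc0uw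
      · have heT : e ∉ T := fun h => heT' (hT'mem h he)
        have hene : e ≠ mkc n 0 z hz0 hzn := fun h => heT' (h ▸ Finset.mem_insert_self _ _)
        obtain ⟨f, hfT, hcr⟩ := hT.2.2 e hediag heT
        by_cases hf : f = mkc n u w huwlt hwn
        · subst hf
          have hcr' := crossing_symm hcr
          rw [crossing_mkc_iff] at hcr'
          have hpq : e.1.1.val < e.1.2.val := e.2
          have hqn : e.1.2.val < n := e.1.2.isLt
          rcases hcr' with ⟨h1, h2, h3⟩ | ⟨h1, h2, h3⟩
          · -- u < p < w < q
            rcases lt_trichotomy e.1.1.val z with hp | hp | hp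
            · refine ⟨mkc n u z huz hzn, hT'mem (huzT huz hzn (by omega))
                (by intro heq; rw [mkc_eq_iff] at heq; simp only [mkc_fst, mkc_snd] at heq; omega), ?_⟩
              exact crossing_symm (by rw [crossing_mkc_iff]; left; exact ⟨h1, hp, by omega⟩)
            · refine ⟨mkc n 0 w (by omega) hwn, hT'mem (h0w (by omega) hwn (by omega))
                (by intro heq; rw [mkc_eq_iff] at heq; simp only [mkc_fst, mkc_snd] at heq; omega), ?_⟩
              exact crossing_symm (by rw [crossing_mkc_iff]; left; exact ⟨by omega, h2, h3⟩)
            · refine ⟨mkc n z w hzw hwn, hT'mem (hzwT hzw hwn (by omega))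
                (by intro heq; rw [mkc_eq_iff] at heq; simp only [mkc_fst, mkc_snd] at heq; omega), ?_⟩
              exact crossing_symm (by rw [crossing_mkc_iff]; left; exact ⟨hp, h2, h3⟩)
          · -- p < u < q < w
            rcases lt_trichotomy e.1.2.val z with hq | hq | hq
            · refine ⟨mkc n u z huz hzn, hT'mem (huzT huz hzn (by omega))
                (by intro heq; rw [mkc_eq_iff] at heq; simp only [mkc_fst, mkc_snd] at heq; omega), ?_⟩
              exact crossing_symm (by rw [crossing_mkc_iff]; right; exact ⟨h1, h2, hq⟩)
            · rcases Nat.eq_zero_or_pos e.1.1.val with hp0 | hp0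
              · exact absurd (chord_ext (by simp [hp0]) (by simp [hq])) hene
              · refine ⟨mkc n 0 u (by omega) (by omega),
                  hT'mem (h0u (by omega) (by omega) (by omega))
                  (by intro heq; rw [mkc_eq_iff] at heq; simp only [mkc_fst, mkc_snd] at heq; omega), ?_⟩
                exact crossing_symm (by rw [crossing_mkc_iff]; left; exact ⟨hp0, h1, by omega⟩)
            · refine ⟨mkc n z w hzw hwn, hT'mem (hzwT hzw hwn (by omega))
                (by intro heq; rw [mkc_eq_iff] at heq; simp only [mkc_fst, mkc_snd] at heq; omega), ?_⟩
              exact crossing_symm (by rw [crossing_mkc_iff]; right; exact ⟨by omega, hq, h3⟩)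
        · exact ⟨f, hT'mem hfT hf, hcr⟩
  refine ⟨insert (mkc n 0 z hz0 hzn) (T.erase (mkc n u w huwlt hwn)),
    ⟨hT, hT'tri, mkc n u w huwlt hwn, mkc n 0 z hz0 hzn, huw, hc0T, rfl⟩, ?_⟩
  -- degree computation
  have hfil : (insert (mkc n 0 z hz0 hzn) (T.erase (mkc n u w huwlt hwn))).filter
      (fun c => c.1.1 = x0 ∨ c.1.2 = x0) =
      insert (mkc n 0 z hz0 hzn) (T.filter (fun c => c.1.1 = x0 ∨ c.1.2 = x0)) := by
    rw [Finset.filter_insert, if_pos (Or.inl hc0x), Finset.filter_erase]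
    congr 1
    apply Finset.erase_eq_of_notMem
    intro h
    rcases Finset.mem_filter.mp h with ⟨-, h' | h'⟩
    · have := congrArg Fin.val h'
      simp only [mkc_fst, hx] at this
      omega
    · have := congrArg Fin.val h'
      simp only [mkc_snd, hx] at this
      omega
  unfold chordDeg
  rw [hfil, Finset.card_insert_of_notMem]
  intro h
  exact hc0T (Finset.mem_of_mem_filter _ h)

lemma reach {n : ℕ} (hn : 3 ≤ n) {x0 : Fin n} (hx : x0.val = 0) :
    ∀ (k : ℕ) (T : Finset (Chord n)), IsTriangulation n T → n - 3 - chordDeg n T x0 ≤ k →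
    ∃ (m : ℕ) (f : ℕ → Finset (Chord n)), m ≤ n - 3 - chordDeg n T x0 ∧ f 0 = T ∧
      (∀ i < m, Flip n (f i) (f (i + 1))) ∧ ∀ c ∈ f m, c.1.1 = x0 ∨ c.1.2 = x0 := by
  intro k
  induction k with
  | zero =>
    intro T hT hk
    have hle := deg_le hT hx hn
    exact ⟨0, fun _ => T, by omega, rfl, fun i hi => absurd hi (by omega),
      full_of_deg_eq hT hx hn (by omega)⟩
  | succ k ih =>
    intro T hT hk
    by_cases hd : chordDeg n T x0 = n - 3
    · exact ⟨0, fun _ => T, by omega, rfl, fun i hi => absurd hi (by omega),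
        full_of_deg_eq hT hx hn hd⟩
    · have hlt : chordDeg n T x0 < n - 3 := lt_of_le_of_ne (deg_le hT hx hn) hd
      obtain ⟨T', hflip, hdeg'⟩ := flip_up hT hx hn hlt
      obtain ⟨m, f, hm, hf0, hfl, hfin⟩ := ih T' hflip.2.1 (by omega)
      refine ⟨m + 1, fun i => if i = 0 then T else f (i - 1), by omega, by simp, ?_, ?_⟩
      · intro i hi
        rcases Nat.eq_zero_or_pos i with h0 | h0
        · subst h0
          simp only [if_pos rfl, if_neg (by omega : (1:ℕ) ≠ 0)]
          rw [show (1:ℕ) - 1 = 0 from rfl, hf0]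
          exact hflip
        · simp only [if_neg (by omega : i ≠ 0), if_neg (by omega : i + 1 ≠ 0)]
          have := hfl (i - 1) (by omega)
          rwa [show i - 1 + 1 = i + 1 - 1 from by omega] at this
      · simp only [if_neg (by omega : m + 1 ≠ 0), Nat.add_sub_cancel]
        exact hfin

/-! ### Rotation of the polygon -/

def vrot (n K : ℕ) (a : Fin n) : Fin n :=
  ⟨(a.val + (n - K)) % n, Nat.mod_lt _ (lt_of_le_of_lt (Nat.zero_le _) a.isLt)⟩

lemma vrot_val {n K : ℕ} (hK : K ≤ n) (a : Fin n) :
    (vrot n K a).val = if a.val < K then a.val + n - K else a.val - K := by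
  have ha := a.isLt
  show (a.val + (n - K)) % n = _
  split_ifs with h
  · rw [Nat.mod_eq_of_lt (by omega)]; omega
  · rw [show a.val + (n - K) = (a.val - K) + n from by omega, Nat.add_mod_right,
      Nat.mod_eq_of_lt (by omega)]

lemma vrot_inj {n K : ℕ} (hK : K ≤ n) {a b : Fin n} (h : vrot n K a = vrot n K b) : a = b := by
  have hv := congrArg Fin.val h
  rw [vrot_val hK, vrot_val hK] at hv
  have ha := a.isLt; have hb := b.isLt
  apply Fin.ext
  split_ifs at hv <;> omega

lemma vrot_vrot {n K K' : ℕ} (hK : K ≤ n) (hK' : K' ≤ n) (hs : K + K' = n) (a : Fin n) :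
    vrot n K' (vrot n K a) = a := by
  have ha := a.isLt
  apply Fin.ext
  rw [vrot_val hK', vrot_val hK]
  split_ifs <;> omega

def crot (n K : ℕ) (hK : K ≤ n) (c : Chord n) : Chord n :=
  if h : (vrot n K c.1.1) < (vrot n K c.1.2) then ⟨(vrot n K c.1.1, vrot n K c.1.2), h⟩
  else ⟨(vrot n K c.1.2, vrot n K c.1.1),
    lt_of_le_of_ne (not_lt.mp h) (fun he => absurd (vrot_inj hK he) (ne_of_gt c.2))⟩

lemma crot_val1 {n K : ℕ} (hK : K ≤ n) (c : Chord n) :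
    ((crot n K hK c).1.1).val = min (vrot n K c.1.1).val (vrot n K c.1.2).val := by
  by_cases h : vrot n K c.1.1 < vrot n K c.1.2
  · rw [show crot n K hK c = _ from dif_pos h]
    show (vrot n K c.1.1).val = _
    rw [Fin.lt_def] at h; omega
  · rw [show crot n K hK c = _ from dif_neg h]
    show (vrot n K c.1.2).val = _
    rw [Fin.lt_def, not_lt] at h; omega

lemma crot_val2 {n K : ℕ} (hK : K ≤ n) (c : Chord n) :
    ((crot n K hK c).1.2).val = max (vrot n K c.1.1).val (vrot n K c.1.2).val := by
  by_cases h : vrot n K c.1.1 < vrot n K c.1.2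
  · rw [show crot n K hK c = _ from dif_pos h]
    show (vrot n K c.1.2).val = _
    rw [Fin.lt_def] at h; omega
  · rw [show crot n K hK c = _ from dif_neg h]
    show (vrot n K c.1.1).val = _
    rw [Fin.lt_def, not_lt] at h; omega

lemma crossing_crot {n K : ℕ} (hK : K ≤ n) (c d : Chord n) :
    Crossing n (crot n K hK c) (crot n K hK d) ↔ Crossing n c d := by
  rw [crossing_iff, crossing_iff]
  rw [crot_val1, crot_val2, crot_val1, crot_val2]
  rw [vrot_val hK, vrot_val hK, vrot_val hK, vrot_val hK]
  have h1 : c.1.1.val < c.1.2.val := c.2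
  have h2 : d.1.1.val < d.1.2.val := d.2
  have h3 := c.1.2.isLt
  have h4 := d.1.2.isLt
  split_ifs <;> omega

lemma diag_crot {n K : ℕ} (hK : K ≤ n) (c : Chord n) :
    IsDiagonal n (crot n K hK c) ↔ IsDiagonal n c := by
  unfold IsDiagonal
  rw [crot_val1, crot_val2, vrot_val hK, vrot_val hK]
  have h1 : c.1.1.val < c.1.2.val := c.2
  have h3 := c.1.2.isLt
  split_ifs <;> omega

lemma crot_crot {n K K' : ℕ} (hK : K ≤ n) (hK' : K' ≤ n) (hs : K + K' = n) (c : Chord n) :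
    crot n K' hK' (crot n K hK c) = c := by
  have h1 : c.1.1.val < c.1.2.val := c.2
  have h3 := c.1.2.isLt
  apply chord_ext
  · rw [crot_val1, vrot_val hK', vrot_val hK', crot_val1 hK, crot_val2 hK,
      vrot_val hK, vrot_val hK]
    split_ifs <;> omega
  · rw [crot_val2, vrot_val hK', vrot_val hK', crot_val1 hK, crot_val2 hK,
      vrot_val hK, vrot_val hK]
    split_ifs <;> omega

lemma crot_injective {n K K' : ℕ} (hK : K ≤ n) (hK' : K' ≤ n) (hs : K + K' = n) :
    Function.Injective (crot n K hK) := fun a b h => by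
  have := congrArg (crot n K' hK') h
  rwa [crot_crot hK hK' hs, crot_crot hK hK' hs] at this

lemma crot_inc {n K : ℕ} (hK : K ≤ n) (c : Chord n) (x : Fin n) :
    ((crot n K hK c).1.1 = vrot n K x ∨ (crot n K hK c).1.2 = vrot n K x) ↔
      (c.1.1 = x ∨ c.1.2 = x) := by
  by_cases h : vrot n K c.1.1 < vrot n K c.1.2
  · rw [show crot n K hK c = _ from dif_pos h]
    constructor
    · rintro (h' | h')
      · exact Or.inl (vrot_inj hK h')
      · exact Or.inr (vrot_inj hK h')
    · rintro (h' | h')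
      · exact Or.inl (congrArg (vrot n K) h')
      · exact Or.inr (congrArg (vrot n K) h')
  · rw [show crot n K hK c = _ from dif_neg h]
    constructor
    · rintro (h' | h')
      · exact Or.inr (vrot_inj hK h')
      · exact Or.inl (vrot_inj hK h')
    · rintro (h' | h')
      · exact Or.inr (congrArg (vrot n K) h')
      · exact Or.inl (congrArg (vrot n K) h')

lemma tri_crot {n K K' : ℕ} (hK : K ≤ n) (hK' : K' ≤ n) (hs : K + K' = n)
    {T : Finset (Chord n)} (hT : IsTriangulation n T) :
    IsTriangulation n (T.image (crot n K hK)) := by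
  refine ⟨?_, ?_, ?_⟩
  · intro c hc
    obtain ⟨c0, hc0, rfl⟩ := Finset.mem_image.mp hc
    exact (diag_crot hK c0).mpr (hT.1 c0 hc0)
  · intro c hc d hd hne
    obtain ⟨c0, hc0, rfl⟩ := Finset.mem_image.mp hc
    obtain ⟨d0, hd0, rfl⟩ := Finset.mem_image.mp hd
    intro hcr
    exact hT.2.1 c0 hc0 d0 hd0 (fun h => hne (by rw [h])) ((crossing_crot hK _ _).mp hcr)
  · intro c hcd hcn
    have hc0 : crot n K hK (crot n K' hK' c) = c := crot_crot hK' hK (by omega) c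
    have hdg : IsDiagonal n (crot n K' hK' c) := (diag_crot hK' c).mpr hcd
    have hcn0 : crot n K' hK' c ∉ T := fun h => hcn (hc0 ▸ Finset.mem_image_of_mem _ h)
    obtain ⟨d, hdT, hcr⟩ := hT.2.2 _ hdg hcn0
    refine ⟨crot n K hK d, Finset.mem_image_of_mem _ hdT, ?_⟩
    rw [← hc0]
    exact (crossing_crot hK _ _).mpr hcr

lemma deg_crot {n K K' : ℕ} (hK : K ≤ n) (hK' : K' ≤ n) (hs : K + K' = n)
    (T : Finset (Chord n)) (x : Fin n) :
    chordDeg n (T.image (crot n K hK)) (vrot n K x) = chordDeg n T x := by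
  classical
  unfold chordDeg
  rw [Finset.filter_image]
  rw [Finset.card_image_of_injective _ (crot_injective hK hK' hs)]
  congr 1
  apply Finset.filter_congr
  intro c _
  exact crot_inc hK c x

lemma flip_crot {n K K' : ℕ} (hK : K ≤ n) (hK' : K' ≤ n) (hs : K + K' = n)
    {T T' : Finset (Chord n)} (h : Flip n T T') :
    Flip n (T.image (crot n K hK)) (T'.image (crot n K hK)) := by
  obtain ⟨h1, h2, c, c', hc, hc', heq⟩ := h
  refine ⟨tri_crot hK hK' hs h1, tri_crot hK hK' hs h2,
    crot n K hK c, crot n K hK c', Finset.mem_image_of_mem _ hc, ?_, ?_⟩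
  · intro hmem
    obtain ⟨c0, hc0, he⟩ := Finset.mem_image.mp hmem
    exact hc' (crot_injective hK hK' hs he ▸ hc0)
  · rw [heq, Finset.image_insert, Finset.image_erase (crot_injective hK hK' hs)]

end Stmt9Aux

open Stmt9Aux

/-- In any diagonal subdivision of a convex `n`-gon (`n ≥ 3`), every vertex `x` has degree
at most `n - 3`; if `deg x < n - 3` there is a flip increasing `deg x` by one; and the
subdivision can be transformed into the fan at `x` by at most `n - 3 - deg x` flips. -/
theorem stmt_9 (n : ℕ) (hn : 3 ≤ n) (T : Finset (Chord n))
    (hT : IsTriangulation n T) (x : Fin n) :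
    chordDeg n T x ≤ n - 3 ∧
    (chordDeg n T x < n - 3 →
      ∃ T', Flip n T T' ∧ chordDeg n T' x = chordDeg n T x + 1) ∧
    ∃ (m : ℕ) (f : ℕ → Finset (Chord n)), m ≤ n - 3 - chordDeg n T x ∧ f 0 = T ∧
      (∀ i < m, Flip n (f i) (f (i + 1))) ∧
      ∀ c ∈ f m, c.1.1 = x ∨ c.1.2 = x := by
  classical
  have hK : x.val ≤ n := le_of_lt x.isLt
  have hK' : n - x.val ≤ n := Nat.sub_le _ _
  have hs : x.val + (n - x.val) = n := by omega
  have hx0 : (vrot n x.val x).val = 0 := by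
    rw [vrot_val hK, if_neg (lt_irrefl _)]; omega
  have hU : IsTriangulation n (T.image (crot n x.val hK)) := tri_crot hK hK' hs hT
  have hdegU : chordDeg n (T.image (crot n x.val hK)) (vrot n x.val x) = chordDeg n T x :=
    deg_crot hK hK' hs T x
  have hback : ∀ S : Finset (Chord n),
      (S.image (crot n x.val hK)).image (crot n (n - x.val) hK') = S := by
    intro S
    rw [Finset.image_image]
    rw [show (crot n (n - x.val) hK' ∘ crot n x.val hK) = id from
      funext fun c => crot_crot hK hK' hs c]
    exact Finset.image_id
  have hxb : vrot n (n - x.val) (vrot n x.val x) = x := vrot_vrot hK hK' hs x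
  refine ⟨?_, ?_, ?_⟩
  · rw [← hdegU]; exact deg_le hU hx0 hn
  · intro hlt
    obtain ⟨U', hflipU, hdegU'⟩ := flip_up hU hx0 hn (by rw [hdegU]; exact hlt)
    refine ⟨U'.image (crot n (n - x.val) hK'), ?_, ?_⟩
    · have := flip_crot hK' hK (by omega) hflipU
      rwa [hback T] at this
    · have h1 := deg_crot hK' hK (by omega) U' (vrot n x.val x)
      rw [hxb] at h1
      rw [h1, hdegU', hdegU]
  · obtain ⟨m, f, hm, hf0, hfl, hfin⟩ :=
      reach hn hx0 (n - 3 - chordDeg n (T.image (crot n x.val hK)) (vrot n x.val x))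
        (T.image (crot n x.val hK)) hU le_rfl
    refine ⟨m, fun i => (f i).image (crot n (n - x.val) hK'), by rwa [hdegU] at hm, ?_, ?_, ?_⟩
    · show (f 0).image _ = T
      rw [hf0]; exact hback T
    · intro i hi
      exact flip_crot hK' hK (by omega) (hfl i hi)
    · intro c hc
      obtain ⟨c0, hc0, rfl⟩ := Finset.mem_image.mp hc
      have := (crot_inc hK' c0 (vrot n x.val x)).mpr (hfin c0 hc0)
      rwa [hxb] at this
end

section
/- Let a, b be positive integers with a < b. Write b = na + r with 0 ≤ r < a. Then the pair of pairings {f: [1,a] → [a+2b+1, 2a+2b], f(x) = x + a + 2b; g: [a+1, a+b] → [a+b+1, a+2b], g(x) = x + b; h: [1, a+b] → [a+b+1, 2a+2b], h(x) = x + a + b} on the interval [1, 2a+2b] has the same orbit-partition restricted to [1, a+b] as the pair {f': [1,a] → [b+1, a+b], f'(x) = x + b; g'': [1,b] → [a+1, a+b], g''(x) = x + a} on [1, a+b], and the number of orbits of either system equals gcd(a,b). -/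
/-!
On `[1, a+b]` the pairings `f'` and `g''` realise the rotation `x ↦ x + a` modulo `a + b`
(by `g''` where `x ≤ b`, by `f'⁻¹` elsewhere). Every shift involved is a multiple of
`gcd(a, b) = gcd(a, a+b)`, and conversely Bézout yields a power of the rotation joining any two
points that are congruent modulo it; so the orbits are exactly the `gcd(a, b)` residue classes.
In the system `f, g, h` the pairing `h` identifies `[a+b+1, 2a+2b]` with `[1, a+b]`, and folding
along `h` turns `f` into `f'` and `g` into `g''⁻¹`, so both systems have the same orbits on
`[1, a+b]`.
-/

open Relation Function

theorem Relation.EqvGen.map {α β : Type*} {r : α → α → Prop} {s : β → β → Prop} (f : α → β)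
    (h : ∀ u v, r u v → EqvGen s (f u) (f v)) {x y : α} (hxy : EqvGen r x y) :
    EqvGen s (f x) (f y) :=
  (InvImage.equivalence _ f (EqvGen.is_equivalence s)).eqvGen_iff.1 (hxy.mono h)

theorem Relation.EqvGen.modEq {r : ℕ → ℕ → Prop} {d : ℕ} (h : ∀ u v, r u v → u ≡ v [MOD d])
    {x y : ℕ} (hxy : EqvGen r x y) : x ≡ y [MOD d] :=
  (⟨Nat.ModEq.refl, Nat.ModEq.symm, Nat.ModEq.trans⟩ : Equivalence (Nat.ModEq d)).eqvGen_iff.1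
    (hxy.mono h)

theorem Nat.exists_add_mul_modEq_of_modEq_gcd {a n x y : ℕ} [NeZero n]
    (h : x ≡ y [MOD Nat.gcd a n]) : ∃ k, x + k * a ≡ y [MOD n] := by
  obtain ⟨j, hj⟩ := Nat.modEq_iff_dvd.1 h
  refine ⟨((Nat.gcdA a n * j : ℤ) : ZMod n).val, ?_⟩
  have hbezout := congrArg (fun z : ℤ => (z : ZMod n)) (hj.trans (by rw [Nat.gcd_eq_gcd_ab]))
  rw [← ZMod.natCast_eq_natCast_iff]
  push_cast [ZMod.natCast_zmod_val, ZMod.natCast_self] at hbezout ⊢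
  linear_combination -hbezout

theorem card_quotient_eq_of_iff_modEq {s : Setoid ℕ} {N d : ℕ} (hd : 0 < d) (hdN : d ≤ N)
    (h : ∀ x y, 1 ≤ x → x ≤ N → 1 ≤ y → y ≤ N → (s x y ↔ x ≡ y [MOD d])) :
    Nat.card (Quotient (s.comap (Subtype.val : {x : ℕ // 1 ≤ x ∧ x ≤ N} → ℕ))) = d := by
  have : NeZero d := ⟨hd.ne'⟩
  let residue : {x : ℕ // 1 ≤ x ∧ x ≤ N} → ZMod d := fun x => x.1
  have hker : s.comap Subtype.val = Setoid.ker residue := by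
    ext x y
    rw [Setoid.comap_rel, Setoid.ker_def, ZMod.natCast_eq_natCast_iff]
    exact h _ _ x.2.1 x.2.2 y.2.1 y.2.2
  have hsurj : Surjective residue := fun z =>
    ⟨⟨(z - 1).val + 1, by omega, by have := (z - 1).val_lt; omega⟩, by
      simp [residue]⟩
  rw [hker, Nat.card_congr (Setoid.quotientKerEquivOfSurjective _ hsurj), Nat.card_zmod]

namespace AHTEuclid

/-- The pairings `f`, `g`, `h` on `[1, 2a+2b]`, one disjunct each. -/
def fghRel (a b u v : ℕ) : Prop :=
  (1 ≤ u ∧ u ≤ a ∧ v = u + a + 2 * b) ∨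
  (a + 1 ≤ u ∧ u ≤ a + b ∧ v = u + b) ∨
  (1 ≤ u ∧ u ≤ a + b ∧ v = u + a + b)

/-- The pairings `f'`, `g''` on `[1, a+b]`. -/
def fgRel (a b u v : ℕ) : Prop :=
  (1 ≤ u ∧ u ≤ a ∧ v = u + b) ∨ (1 ≤ u ∧ u ≤ b ∧ v = u + a)

/-- The inverse of `h` on `[a+b+1, 2a+2b]`, the identity on `[1, a+b]`. -/
def fold (a b x : ℕ) : ℕ :=
  if x ≤ a + b then x else x - (a + b)

variable {a b x y : ℕ}

theorem fgRel_modEq_gcd (u v : ℕ) : fgRel a b u v → u ≡ v [MOD Nat.gcd a b] := by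
  rintro (⟨-, -, rfl⟩ | ⟨-, -, rfl⟩)
  · exact Nat.left_modEq_add_iff.2 (Nat.gcd_dvd_right a b)
  · exact Nat.left_modEq_add_iff.2 (Nat.gcd_dvd_left a b)

theorem fghRel_modEq_gcd (u v : ℕ) : fghRel a b u v → u ≡ v [MOD Nat.gcd a b] := by
  have hda := Nat.gcd_dvd_left a b
  have hdb := Nat.gcd_dvd_right a b
  rintro (⟨-, -, rfl⟩ | ⟨-, -, rfl⟩ | ⟨-, -, rfl⟩)
  · rw [add_assoc]
    exact Nat.left_modEq_add_iff.2 (dvd_add hda (dvd_mul_of_dvd_right hdb 2))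
  · exact Nat.left_modEq_add_iff.2 hdb
  · rw [add_assoc]
    exact Nat.left_modEq_add_iff.2 (dvd_add hda hdb)

theorem exists_fgRel_rotate (hx₁ : 1 ≤ x) (hx₂ : x ≤ a + b) :
    ∃ x', 1 ≤ x' ∧ x' ≤ a + b ∧ x' ≡ x + a [MOD a + b] ∧ EqvGen (fgRel a b) x x' := by
  by_cases hxb : x ≤ b
  · exact ⟨x + a, by omega, by omega, .refl _, .rel _ _ (Or.inr ⟨hx₁, hxb, rfl⟩)⟩
  · refine ⟨x - b, by omega, by omega, ?_,
      .symm _ _ (.rel _ _ (Or.inl ⟨by omega, by omega, by omega⟩))⟩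
    rw [show x + a = x - b + (a + b) by omega]
    exact Nat.modEq_add_modulus_iff.2 (.refl _)

theorem eqvGen_fgRel_of_add_mul_modEq (k : ℕ) (hx₁ : 1 ≤ x) (hx₂ : x ≤ a + b) (hy₁ : 1 ≤ y)
    (hy₂ : y ≤ a + b) (h : x + k * a ≡ y [MOD a + b]) : EqvGen (fgRel a b) x y := by
  induction k generalizing x with
  | zero =>
    rw [zero_mul, add_zero] at h
    rw [h.eq_of_abs_lt (by rw [abs_sub_lt_iff]; omega)]
    exact .refl _
  | succ k ih =>
    obtain ⟨x', hx'₁, hx'₂, hx', hxx'⟩ := exists_fgRel_rotate hx₁ hx₂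
    refine .trans _ _ _ hxx' (ih hx'₁ hx'₂ ?_)
    calc x' + k * a ≡ x + a + k * a [MOD a + b] := hx'.add_right _
      _ = x + (k + 1) * a := by ring
      _ ≡ y [MOD a + b] := h

theorem eqvGen_fgRel_iff_modEq (hx₁ : 1 ≤ x) (hx₂ : x ≤ a + b) (hy₁ : 1 ≤ y)
    (hy₂ : y ≤ a + b) : EqvGen (fgRel a b) x y ↔ x ≡ y [MOD Nat.gcd a b] := by
  refine ⟨EqvGen.modEq fgRel_modEq_gcd, fun h => ?_⟩
  have : NeZero (a + b) := ⟨by omega⟩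
  have hmod : x ≡ y [MOD Nat.gcd a (a + b)] := by rwa [Nat.gcd_self_add_right]
  obtain ⟨k, hk⟩ := Nat.exists_add_mul_modEq_of_modEq_gcd hmod
  exact eqvGen_fgRel_of_add_mul_modEq k hx₁ hx₂ hy₁ hy₂ hk

theorem eqvGen_fghRel_of_fgRel (u v : ℕ) : fgRel a b u v → EqvGen (fghRel a b) u v := by
  rintro (⟨hu₁, hu₂, rfl⟩ | ⟨hu₁, hu₂, rfl⟩)
  · have hf : fghRel a b u (u + a + 2 * b) := Or.inl ⟨hu₁, hu₂, rfl⟩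
    have hh : fghRel a b (u + b) (u + a + 2 * b) := Or.inr (Or.inr ⟨by omega, by omega, by omega⟩)
    exact .trans _ _ _ (.rel _ _ hf) (.symm _ _ (.rel _ _ hh))
  · have hh : fghRel a b u (u + a + b) := Or.inr (Or.inr ⟨hu₁, by omega, rfl⟩)
    have hg : fghRel a b (u + a) (u + a + b) := Or.inr (Or.inl ⟨by omega, by omega, rfl⟩)
    exact .trans _ _ _ (.rel _ _ hh) (.symm _ _ (.rel _ _ hg))

theorem eqvGen_fgRel_fold_of_fghRel (u v : ℕ) :
    fghRel a b u v → EqvGen (fgRel a b) (fold a b u) (fold a b v) := by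
  rintro (⟨hu₁, hu₂, rfl⟩ | ⟨hu₁, hu₂, rfl⟩ | ⟨hu₁, hu₂, rfl⟩) <;>
    rw [fold, fold, if_pos (by omega), if_neg (by omega)]
  · rw [show u + a + 2 * b - (a + b) = u + b by omega]
    exact .rel _ _ (Or.inl ⟨hu₁, hu₂, rfl⟩)
  · rw [show u + b - (a + b) = u - a by omega]
    exact .symm _ _ (.rel _ _ (Or.inr ⟨by omega, by omega, by omega⟩))
  · rw [show u + a + b - (a + b) = u by omega]
    exact .refl _

theorem fold_mem (hx₁ : 1 ≤ x) (hx₂ : x ≤ 2 * a + 2 * b) :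
    1 ≤ fold a b x ∧ fold a b x ≤ a + b := by
  unfold fold
  split_ifs <;> omega

theorem eqvGen_fghRel_fold (hx : x ≤ 2 * a + 2 * b) :
    EqvGen (fghRel a b) (fold a b x) x := by
  unfold fold
  split_ifs
  · exact .refl _
  · exact .rel _ _ (Or.inr (Or.inr ⟨by omega, by omega, by omega⟩))

theorem eqvGen_fghRel_iff_fgRel (hx : x ≤ a + b) (hy : y ≤ a + b) :
    EqvGen (fghRel a b) x y ↔ EqvGen (fgRel a b) x y := by
  refine ⟨fun h => ?_, EqvGen.map id eqvGen_fghRel_of_fgRel⟩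
  simpa [fold, hx, hy] using EqvGen.map (fold a b) eqvGen_fgRel_fold_of_fghRel h

theorem eqvGen_fghRel_iff_modEq (hx₁ : 1 ≤ x) (hx₂ : x ≤ 2 * a + 2 * b)
    (hy₁ : 1 ≤ y) (hy₂ : y ≤ 2 * a + 2 * b) :
    EqvGen (fghRel a b) x y ↔ x ≡ y [MOD Nat.gcd a b] := by
  refine ⟨EqvGen.modEq fghRel_modEq_gcd, fun h => ?_⟩
  have hx := eqvGen_fghRel_fold hx₂
  have hy := eqvGen_fghRel_fold hy₂
  obtain ⟨hx'₁, hx'₂⟩ := fold_mem hx₁ hx₂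
  obtain ⟨hy'₁, hy'₂⟩ := fold_mem hy₁ hy₂
  have hfold : EqvGen (fgRel a b) (fold a b x) (fold a b y) :=
    (eqvGen_fgRel_iff_modEq hx'₁ hx'₂ hy'₁ hy'₂).2
      (((hx.modEq fghRel_modEq_gcd).trans h).trans (hy.modEq fghRel_modEq_gcd).symm)
  exact .trans _ _ _ (.symm _ _ hx) (.trans _ _ _ (hfold.map id eqvGen_fghRel_of_fgRel) hy)

end AHTEuclid

theorem stmt_13_general (a b : ℕ) (hab : a < b) :
    (∀ x y : ℕ, 1 ≤ x → x ≤ a + b → 1 ≤ y → y ≤ a + b →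
      (Relation.EqvGen (fun u v : ℕ =>
          (1 ≤ u ∧ u ≤ a ∧ v = u + a + 2 * b) ∨
          (a + 1 ≤ u ∧ u ≤ a + b ∧ v = u + b) ∨
          (1 ≤ u ∧ u ≤ a + b ∧ v = u + a + b)) x y ↔
       Relation.EqvGen (fun u v : ℕ =>
          (1 ≤ u ∧ u ≤ a ∧ v = u + b) ∨ (1 ≤ u ∧ u ≤ b ∧ v = u + a)) x y)) ∧
    Nat.card (Quotient (Setoid.comap
      (Subtype.val : {x : ℕ // 1 ≤ x ∧ x ≤ a + b} → ℕ)
      ⟨Relation.EqvGen (fun u v : ℕ =>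
          (1 ≤ u ∧ u ≤ a ∧ v = u + b) ∨ (1 ≤ u ∧ u ≤ b ∧ v = u + a)),
        Relation.EqvGen.is_equivalence _⟩)) = Nat.gcd a b ∧
    Nat.card (Quotient (Setoid.comap
      (Subtype.val : {x : ℕ // 1 ≤ x ∧ x ≤ 2 * a + 2 * b} → ℕ)
      ⟨Relation.EqvGen (fun u v : ℕ =>
          (1 ≤ u ∧ u ≤ a ∧ v = u + a + 2 * b) ∨
          (a + 1 ≤ u ∧ u ≤ a + b ∧ v = u + b) ∨
          (1 ≤ u ∧ u ≤ a + b ∧ v = u + a + b)),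
        Relation.EqvGen.is_equivalence _⟩)) = Nat.gcd a b := by
  have hb : 0 < b := by omega
  have hd : 0 < Nat.gcd a b := Nat.gcd_pos_of_pos_right a hb
  have hdb : Nat.gcd a b ≤ b := Nat.le_of_dvd hb (Nat.gcd_dvd_right a b)
  refine ⟨fun x y _ hx _ hy => AHTEuclid.eqvGen_fghRel_iff_fgRel hx hy, ?_, ?_⟩
  · exact card_quotient_eq_of_iff_modEq hd (by omega) fun _ _ =>
      AHTEuclid.eqvGen_fgRel_iff_modEq
  · exact card_quotient_eq_of_iff_modEq hd (by omega) fun _ _ =>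
      AHTEuclid.eqvGen_fghRel_iff_modEq

/-- One shifted cycle of the AHT algorithm applied to the torus train track with weights
`a, b, a+b`: the system of pairings `{f, g, h}` on `[1, 2a+2b]` has the same orbit
partition, restricted to `[1, a+b]`, as the system `{f', g''}` on `[1, a+b]`, and
the number of orbits of either system equals `gcd(a,b)`. -/
theorem stmt_13 (a b : ℕ) (ha : 0 < a) (hab : a < b) :
    (∀ x y : ℕ, 1 ≤ x → x ≤ a + b → 1 ≤ y → y ≤ a + b →
      (Relation.EqvGen (fun u v : ℕ =>
          (1 ≤ u ∧ u ≤ a ∧ v = u + a + 2 * b) ∨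
          (a + 1 ≤ u ∧ u ≤ a + b ∧ v = u + b) ∨
          (1 ≤ u ∧ u ≤ a + b ∧ v = u + a + b)) x y ↔
       Relation.EqvGen (fun u v : ℕ =>
          (1 ≤ u ∧ u ≤ a ∧ v = u + b) ∨ (1 ≤ u ∧ u ≤ b ∧ v = u + a)) x y)) ∧
    Nat.card (Quotient (Setoid.comap
      (Subtype.val : {x : ℕ // 1 ≤ x ∧ x ≤ a + b} → ℕ)
      ⟨Relation.EqvGen (fun u v : ℕ =>
          (1 ≤ u ∧ u ≤ a ∧ v = u + b) ∨ (1 ≤ u ∧ u ≤ b ∧ v = u + a)),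
        Relation.EqvGen.is_equivalence _⟩)) = Nat.gcd a b ∧
    Nat.card (Quotient (Setoid.comap
      (Subtype.val : {x : ℕ // 1 ≤ x ∧ x ≤ 2 * a + 2 * b} → ℕ)
      ⟨Relation.EqvGen (fun u v : ℕ =>
          (1 ≤ u ∧ u ≤ a ∧ v = u + a + 2 * b) ∨
          (a + 1 ≤ u ∧ u ≤ a + b ∧ v = u + b) ∨
          (1 ≤ u ∧ u ≤ a + b ∧ v = u + a + b)),
        Relation.EqvGen.is_equivalence _⟩)) = Nat.gcd a b :=
  stmt_13_general a b hab
end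

section
/- Let g₁ and g₂ be translations g₁(x) = x + t₁ and g₂(x) = x + t₂ acting as partial bijections on integer intervals, each periodic with periodic intervals R₁ and R₂ (i.e., gᵢ pairs [aᵢ, bᵢ] with [aᵢ + tᵢ, bᵢ + tᵢ] and aᵢ + tᵢ ≤ bᵢ + 1). If the overlap R₁ ∩ R₂ has width at least t₁ + t₂, then on R₁ ∩ R₂ the orbit equivalence generated by g₁ and g₂ coincides with the orbit equivalence generated by the single translation x ↦ x + gcd(t₁, t₂). -/
namespace Stmt18Aux

/-- walking by a single positive step `d` inside `[lo,hi]` -/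
lemma single_of_n (lo hi d : ℤ) (hd : 0 < d) :
    ∀ n : ℕ, ∀ x : ℤ, lo ≤ x → x + n * d ≤ hi →
      Relation.EqvGen (fun u v : ℤ => lo ≤ u ∧ v ≤ hi ∧ v = u + d) x (x + n * d) := by
  intro n
  induction n with
  | zero => intro x hx hxh; simpa using Relation.EqvGen.refl x
  | succ n ih =>
    intro x hx hxh
    have h1 : Relation.EqvGen (fun u v : ℤ => lo ≤ u ∧ v ≤ hi ∧ v = u + d) x (x + d) := by
      refine Relation.EqvGen.rel _ _ ⟨hx, ?_, rfl⟩
      have : (0:ℤ) ≤ (n:ℤ) * d := mul_nonneg (by positivity) hd.le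
      push_cast at hxh ⊢; nlinarith
    have h2 := ih (x + d) (by linarith) (by push_cast at hxh ⊢; linarith)
    have : x + (↑(n+1)) * d = (x + d) + n * d := by push_cast; ring
    rw [this]
    exact Relation.EqvGen.trans _ _ _ h1 h2

lemma single_of (lo hi d : ℤ) (hd : 0 < d) (x y : ℤ)
    (hx : lo ≤ x) (hxh : x ≤ hi) (hy : lo ≤ y) (hyh : y ≤ hi)
    (hdvd : d ∣ y - x) :
    Relation.EqvGen (fun u v : ℤ => lo ≤ u ∧ v ≤ hi ∧ v = u + d) x y := by
  rcases le_total x y with hle | hle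
  · obtain ⟨c, hc⟩ := hdvd
    have hc0 : 0 ≤ c := by nlinarith
    have hy' : y = x + c.toNat * d := by rw [Int.toNat_of_nonneg hc0]; linarith
    rw [hy']
    exact single_of_n lo hi d hd c.toNat x hx (by rw [← hy']; exact hyh)
  · obtain ⟨c, hc⟩ := (dvd_neg.mpr hdvd)
    have hdvd' : d ∣ x - y := by rw [← neg_sub]; exact ⟨c, hc⟩
    obtain ⟨c', hc'⟩ := hdvd'
    have hc0 : 0 ≤ c' := by nlinarith
    have hx' : x = y + c'.toNat * d := by rw [Int.toNat_of_nonneg hc0]; linarith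
    refine Relation.EqvGen.symm _ _ ?_
    rw [hx']
    exact single_of_n lo hi d hd c'.toNat y hy (by rw [← hx']; exact hxh)

lemma single_dvd (lo hi d : ℤ) (x y : ℤ)
    (h : Relation.EqvGen (fun u v : ℤ => lo ≤ u ∧ v ≤ hi ∧ v = u + d) x y) :
    d ∣ y - x := by
  induction h with
  | rel u v huv => rw [huv.2.2]; simp
  | refl u => simp
  | symm u v _ ih => rw [← neg_sub]; exact dvd_neg.mpr ih
  | trans u v w _ _ ih1 ih2 =>
    have : w - u = (w - v) + (v - u) := by ring
    rw [this]; exact dvd_add ih2 ih1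

section
variable (lo hi t₁ t₂ : ℤ)

local notation "R" => (fun u v : ℤ => lo ≤ u ∧ v ≤ hi ∧ (v = u + t₁ ∨ v = u + t₂))

lemma pair_dvd (x y : ℤ) (h : Relation.EqvGen R x y) :
    (Int.gcd t₁ t₂ : ℤ) ∣ y - x := by
  induction h with
  | rel u v huv =>
    rcases huv.2.2 with h1 | h1 <;> rw [h1]
    · simpa using Int.gcd_dvd_left t₁ t₂
    · simpa using Int.gcd_dvd_right t₁ t₂
  | refl u => simp
  | symm u v _ ih => rw [← neg_sub]; exact dvd_neg.mpr ih
  | trans u v w _ _ ih1 ih2 =>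
    have : w - u = (w - v) + (v - u) := by ring
    rw [this]; exact dvd_add ih2 ih1

variable (ht₁ : 0 < t₁) (ht₂ : 0 < t₂) (hwidth : t₁ + t₂ ≤ hi - lo + 1)

include ht₁ ht₂ hwidth in
/-- reduce any point of `[lo,hi]` to the window `[lo, lo+t₁-1]` by `t₁`-steps -/
lemma reduce : ∀ n : ℕ, ∀ x : ℤ, lo ≤ x → x ≤ hi → (x - lo).toNat ≤ n →
    ∃ u, lo ≤ u ∧ u ≤ lo + t₁ - 1 ∧ Relation.EqvGen R u x ∧ t₁ ∣ x - u := by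
  intro n
  induction n with
  | zero =>
    intro x hx hxh hn
    have : x = lo := by omega
    exact ⟨x, hx, by omega, Relation.EqvGen.refl x, by simp⟩
  | succ n ih =>
    intro x hx hxh hn
    by_cases hcase : x ≤ lo + t₁ - 1
    · exact ⟨x, hx, hcase, Relation.EqvGen.refl x, by simp⟩
    · push_neg at hcase
      obtain ⟨u, hu1, hu2, hu3, hu4⟩ := ih (x - t₁) (by omega) (by omega) (by omega)
      refine ⟨u, hu1, hu2, ?_, ?_⟩
      · refine Relation.EqvGen.trans _ _ _ hu3 ?_
        exact Relation.EqvGen.rel _ _ ⟨by omega, hxh, Or.inl (by ring)⟩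
      · obtain ⟨c, hc⟩ := hu4; exact ⟨c + 1, by linarith [hc]⟩

include ht₁ ht₂ hwidth in
lemma reduce' (x : ℤ) (hx : lo ≤ x) (hxh : x ≤ hi) :
    ∃ u, lo ≤ u ∧ u ≤ lo + t₁ - 1 ∧ Relation.EqvGen R u x ∧ t₁ ∣ x - u :=
  reduce lo hi t₁ t₂ ht₁ ht₂ hwidth (x - lo).toNat x hx hxh le_rfl

include ht₁ ht₂ hwidth in
/-- one rotation step: within the window, move by `t₂ mod t₁` -/
lemma rotate (u : ℤ) (hu : lo ≤ u) (hu' : u ≤ lo + t₁ - 1) :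
    ∃ w, lo ≤ w ∧ w ≤ lo + t₁ - 1 ∧ Relation.EqvGen R u w ∧ t₁ ∣ u + t₂ - w := by
  have hle : u + t₂ ≤ hi := by omega
  obtain ⟨w, hw1, hw2, hw3, hw4⟩ := reduce' lo hi t₁ t₂ ht₁ ht₂ hwidth (u + t₂) (by omega) hle
  refine ⟨w, hw1, hw2, ?_, hw4⟩
  refine Relation.EqvGen.trans _ _ _ ?_ (Relation.EqvGen.symm _ _ hw3)
  exact Relation.EqvGen.rel _ _ ⟨hu, hle, Or.inr rfl⟩

include ht₁ ht₂ hwidth in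
lemma rotate_n : ∀ k : ℕ, ∀ u : ℤ, lo ≤ u → u ≤ lo + t₁ - 1 →
    ∃ w, lo ≤ w ∧ w ≤ lo + t₁ - 1 ∧ Relation.EqvGen R u w ∧ t₁ ∣ u + k * t₂ - w := by
  intro k
  induction k with
  | zero => intro u hu hu'; exact ⟨u, hu, hu', Relation.EqvGen.refl u, by simp⟩
  | succ k ih =>
    intro u hu hu'
    obtain ⟨w, hw1, hw2, hw3, hw4⟩ := ih u hu hu'
    obtain ⟨w', hw'1, hw'2, hw'3, hw'4⟩ := rotate lo hi t₁ t₂ ht₁ ht₂ hwidth w hw1 hw2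
    refine ⟨w', hw'1, hw'2, Relation.EqvGen.trans _ _ _ hw3 hw'3, ?_⟩
    have : u + (↑(k+1)) * t₂ - w' = (u + k * t₂ - w) + (w + t₂ - w') := by push_cast; ring
    rw [this]; exact dvd_add hw4 hw'4

include ht₁ ht₂ hwidth in
/-- the main direction: same residue mod gcd implies connected by the pair relation -/
lemma pair_of (x y : ℤ) (hx : lo ≤ x) (hxh : x ≤ hi) (hy : lo ≤ y) (hyh : y ≤ hi)
    (hdvd : (Int.gcd t₁ t₂ : ℤ) ∣ y - x) :
    Relation.EqvGen R x y := by
  set d : ℤ := (Int.gcd t₁ t₂ : ℤ) with hd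
  obtain ⟨u, hu1, hu2, hu3, hu4⟩ := reduce' lo hi t₁ t₂ ht₁ ht₂ hwidth x hx hxh
  obtain ⟨v, hv1, hv2, hv3, hv4⟩ := reduce' lo hi t₁ t₂ ht₁ ht₂ hwidth y hy hyh
  -- d ∣ v - u
  have hdt₁ : d ∣ t₁ := Int.gcd_dvd_left t₁ t₂
  have hdt₂ : d ∣ t₂ := Int.gcd_dvd_right t₁ t₂
  have hduv : d ∣ v - u := by
    have h1 : d ∣ x - u := dvd_trans hdt₁ hu4
    have h2 : d ∣ y - v := dvd_trans hdt₁ hv4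
    have : v - u = (y - x) + (x - u) - (y - v) := by ring
    rw [this]; exact dvd_sub (dvd_add hdvd h1) h2
  obtain ⟨c, hc⟩ := hduv
  -- Bezout
  have hbez : d = t₁ * Int.gcdA t₁ t₂ + t₂ * Int.gcdB t₁ t₂ := Int.gcd_eq_gcd_ab t₁ t₂
  set A := Int.gcdA t₁ t₂
  set B := Int.gcdB t₁ t₂
  set K : ℕ := ((c * B) % t₁).toNat with hK
  have ht₁ne : t₁ ≠ 0 := ht₁.ne'
  have hKeq : (K : ℤ) = (c * B) % t₁ := Int.toNat_of_nonneg (Int.emod_nonneg _ ht₁ne)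
  have hKmod : t₁ ∣ c * B - K := by
    rw [hKeq, Int.emod_def]
    exact ⟨c * B / t₁, by ring⟩
  obtain ⟨w, hw1, hw2, hw3, hw4⟩ := rotate_n lo hi t₁ t₂ ht₁ ht₂ hwidth K u hu1 hu2
  -- show w = v
  have hwv : t₁ ∣ w - v := by
    -- w ≡ u + K t₂ ≡ u + cB t₂ = v - cA t₁ ≡ v (mod t₁)
    have h1 : t₁ ∣ (u + K * t₂) - w := hw4
    have h2 : t₁ ∣ (c * B - K) * t₂ := Dvd.dvd.mul_right hKmod t₂
    have h3 : v - u = c * t₁ * A + c * B * t₂ := by rw [hc, hbez]; ring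
    obtain ⟨p, hp⟩ := h1
    obtain ⟨q, hq⟩ := hKmod
    exact ⟨-p - q * t₂ - c * A, by linear_combination (-1) * hp - t₂ * hq - h3⟩
  obtain ⟨k, hk⟩ := hwv
  have hk0 : k = 0 := by
    rcases lt_trichotomy k 0 with h | h | h
    · nlinarith
    · exact h
    · nlinarith
  have hwveq : w = v := by rw [hk0] at hk; linarith
  subst hwveq
  exact Relation.EqvGen.trans _ _ _ (Relation.EqvGen.symm _ _ hu3)
    (Relation.EqvGen.trans _ _ _ hw3 hv3)

end
end Stmt18Aux

/-- Periodic merger: two periodic translation pairings `g₁ : x ↦ x + t₁` on `[a₁,b₁]` and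
`g₂ : x ↦ x + t₂` on `[a₂,b₂]`, with periodic intervals `Rᵢ = [aᵢ, bᵢ + tᵢ]` whose overlap
`[lo, hi]` has width at least `t₁ + t₂`, generate on the overlap the same orbit equivalence
as the single translation `x ↦ x + gcd(t₁, t₂)`. -/
theorem stmt_18 (a₁ b₁ t₁ a₂ b₂ t₂ lo hi : ℤ)
    (ht₁ : 0 < t₁) (ht₂ : 0 < t₂)
    (hper₁ : a₁ + t₁ ≤ b₁ + 1) (hper₂ : a₂ + t₂ ≤ b₂ + 1)
    (hlo : lo = max a₁ a₂) (hhi : hi = min (b₁ + t₁) (b₂ + t₂))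
    (hwidth : t₁ + t₂ ≤ hi - lo + 1) :
    ∀ x y : ℤ, lo ≤ x → x ≤ hi → lo ≤ y → y ≤ hi →
      (Relation.EqvGen (fun u v : ℤ => lo ≤ u ∧ v ≤ hi ∧ (v = u + t₁ ∨ v = u + t₂)) x y ↔
       Relation.EqvGen (fun u v : ℤ => lo ≤ u ∧ v ≤ hi ∧ v = u + (Int.gcd t₁ t₂ : ℤ)) x y) := by
  intro x y hx hxh hy hyh
  have hdpos : (0:ℤ) < (Int.gcd t₁ t₂ : ℤ) := by
    have : 0 < Int.gcd t₁ t₂ := Int.gcd_pos_iff.mpr (Or.inl ht₁.ne')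
    exact_mod_cast this
  constructor
  · intro h
    exact Stmt18Aux.single_of lo hi _ hdpos x y hx hxh hy hyh
      (Stmt18Aux.pair_dvd lo hi t₁ t₂ x y h)
  · intro h
    exact Stmt18Aux.pair_of lo hi t₁ t₂ ht₁ ht₂ hwidth x y hx hxh hy hyh
      (Stmt18Aux.single_dvd lo hi _ x y h)
end
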